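/- arXiv:2509.05611 — 5 statements merged into one kernel-verified Lean document; each statement's English description precedes it below -/
import Mathlib

section
/- Let d ≥ 1 and let T = conv{v_1, …, v_{d+1}} ∈ P_d be a simplex inscribed in the unit sphere of ℝ^d with the origin in its interior. For each 1 ≤ j ≤ d+1 let T_j = conv({0} ∪ {v_i : i ≠ j}) denote the simplex obtained from T by replacing the vertex v_j with the origin. Then (Σ_{j=1}^{d+1} vol_d(T_j)²)^{1/2} ≤ (1/d!) · (1 + 1/d)^{d/2}. -/
open MeasureTheory Set Pointwise Matrix Finset


def corner (n : ℕ) : Set (Fin n → ℝ) := {x | (∀ i, 0 ≤ x i) ∧ ∑ i, x i ≤ 1}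

lemma corner_zero : corner 0 = Set.univ := by
  ext x; simp [corner]

lemma isClosed_corner (n : ℕ) : IsClosed (corner n) := by
  have h1 : IsClosed {x : Fin n → ℝ | ∀ i, 0 ≤ x i} := by
    have : {x : Fin n → ℝ | ∀ i, 0 ≤ x i} = ⋂ i, {x | 0 ≤ x i} := by ext; simp
    rw [this]
    exact isClosed_iInter fun i => isClosed_le continuous_const (continuous_apply i)
  have h2 : IsClosed {x : Fin n → ℝ | ∑ i, x i ≤ 1} :=
    isClosed_le (by continuity) continuous_const
  exact h1.inter h2

lemma smul_corner (n : ℕ) {r : ℝ} (hr : 0 ≤ r) :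
    r • corner n = {y : Fin n → ℝ | (∀ i, 0 ≤ y i) ∧ ∑ i, y i ≤ r} := by
  rcases eq_or_lt_of_le hr with h | h
  · rw [← h, Set.zero_smul_set ⟨0, by simp [corner]⟩]
    ext y
    simp only [Set.mem_zero, Set.mem_setOf_eq]
    constructor
    · rintro rfl; simp
    · rintro ⟨h1, h2⟩
      funext i
      have : y i ≤ 0 := le_trans (Finset.single_le_sum (fun j _ => h1 j) (Finset.mem_univ i)) h2
      exact le_antisymm this (h1 i)
  · ext y
    rw [Set.mem_smul_set_iff_inv_smul_mem₀ (ne_of_gt h)]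
    simp only [corner, Set.mem_setOf_eq, Pi.smul_apply, smul_eq_mul, ← Finset.mul_sum]
    have hrr : r * r⁻¹ = 1 := mul_inv_cancel₀ (ne_of_gt h)
    have hr' : 0 < r⁻¹ := inv_pos.2 h
    constructor
    · rintro ⟨h1, h2⟩
      exact ⟨fun i => by nlinarith [h1 i], by nlinarith⟩
    · rintro ⟨h1, h2⟩
      exact ⟨fun i => mul_nonneg hr'.le (h1 i), by nlinarith⟩

lemma volume_corner (n : ℕ) : volume (corner n) = ENNReal.ofReal (1 / n.factorial) := by
  induction n with
  | zero =>
    rw [corner_zero, MeasureTheory.volume_pi, Measure.pi_univ]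
    simp
  | succ n ih =>
    set T : Set (ℝ × (Fin n → ℝ)) :=
      {p | 0 ≤ p.1 ∧ (∀ i, 0 ≤ p.2 i) ∧ p.1 + ∑ i, p.2 i ≤ 1} with hT
    have hTeq : T = {p : ℝ × (Fin n → ℝ) | 0 ≤ p.1} ∩
        ((⋂ i, {p : ℝ × (Fin n → ℝ) | 0 ≤ p.2 i}) ∩
          {p : ℝ × (Fin n → ℝ) | p.1 + ∑ i, p.2 i ≤ 1}) := by
      ext p; simp [hT]
    have hTm : MeasurableSet T := by
      rw [hTeq]
      refine (measurableSet_le measurable_const measurable_fst).inter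
        ((MeasurableSet.iInter fun i =>
          measurableSet_le measurable_const (measurable_snd.eval)).inter
        (measurableSet_le
          (measurable_fst.add (Finset.measurable_sum _ fun i _ =>
            measurable_snd.eval)) measurable_const))
    have hpre : (MeasurableEquiv.piFinSuccAbove (fun _ : Fin (n+1) => ℝ) 0) ⁻¹' T
        = corner (n+1) := by
      ext x
      simp only [MeasurableEquiv.piFinSuccAbove, MeasurableEquiv.coe_mk,
        Equiv.symm_symm, Set.mem_preimage, hT, Set.mem_setOf_eq, corner,
        Fin.insertNthEquiv, Equiv.coe_fn_symm_mk, Fin.removeNth, Fin.succAbove_zero]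
      rw [Fin.sum_univ_succ, Fin.forall_fin_succ]
      tauto
    have key : volume (corner (n+1)) = (volume : Measure (ℝ × (Fin n → ℝ))) T := by
      rw [← hpre]
      exact ((volume_preserving_piFinSuccAbove (fun _ : Fin (n+1) => ℝ) 0).measure_preimage
        hTm.nullMeasurableSet)
    rw [key, Measure.volume_eq_prod, Measure.prod_apply hTm]
    have hvol : ∀ t : ℝ, volume (Prod.mk t ⁻¹' T)
        = Set.indicator (Set.Icc (0:ℝ) 1)
            (fun t => ENNReal.ofReal (|(1-t)^n|) * ENNReal.ofReal (1 / n.factorial)) t := by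
      intro t
      by_cases ht : t ∈ Set.Icc (0:ℝ) 1
      · have hslice : Prod.mk t ⁻¹' T = (1 - t) • corner n := by
          rw [smul_corner n (by linarith [ht.2])]
          ext y
          simp only [Set.mem_preimage, hT, Set.mem_setOf_eq]
          constructor
          · rintro ⟨_, h2, h3⟩; exact ⟨h2, by linarith⟩
          · rintro ⟨h2, h3⟩; exact ⟨ht.1, h2, by linarith⟩
        rw [hslice, Set.indicator_of_mem ht,
          Measure.addHaar_smul volume, ih, Module.finrank_fin_fun]
      · have hslice : Prod.mk t ⁻¹' T = ∅ := by
          ext y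
          simp only [Set.mem_preimage, hT, Set.mem_setOf_eq, Set.mem_empty_iff_false, iff_false]
          rintro ⟨h1, h2, h3⟩
          have hy : 0 ≤ ∑ i, y i := Finset.sum_nonneg fun i _ => h2 i
          simp only [Set.mem_Icc, not_and_or, not_le] at ht
          rcases ht with ht | ht <;> linarith
        rw [hslice, Set.indicator_of_notMem ht, measure_empty]
    simp only [hvol]
    rw [lintegral_indicator measurableSet_Icc _,
      lintegral_mul_const' _ _ (by simp : ENNReal.ofReal (1 / (n.factorial:ℝ)) ≠ ⊤)]
    have habs : ∫⁻ t in Set.Icc (0:ℝ) 1, ENNReal.ofReal (|(1-t)^n|)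
        = ∫⁻ t in Set.Icc (0:ℝ) 1, ENNReal.ofReal ((1-t)^n) := by
      refine setLIntegral_congr_fun measurableSet_Icc (fun t ht => ?_)
      rw [abs_of_nonneg (pow_nonneg (by linarith [ht.2]) n)]
    rw [habs]
    have hcont : Continuous (fun t : ℝ => (1-t)^n) := by continuity
    have hint : ∫⁻ t in Set.Icc (0:ℝ) 1, ENNReal.ofReal ((1-t)^n)
        = ENNReal.ofReal (∫ t in Set.Icc (0:ℝ) 1, (1-t)^n) :=
      (ofReal_integral_eq_lintegral_ofReal (hcont.integrableOn_Icc)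
        ((ae_restrict_iff' measurableSet_Icc).2
          (ae_of_all _ fun t ht => pow_nonneg (by linarith [ht.2]) n))).symm
    rw [hint]
    have hval : ∫ t in Set.Icc (0:ℝ) 1, (1-t)^n = 1/(n+1) := by
      rw [MeasureTheory.integral_Icc_eq_integral_Ioc,
        ← intervalIntegral.integral_of_le zero_le_one]
      have h2 := intervalIntegral.integral_comp_sub_left (a := (0:ℝ)) (b := 1)
        (fun x : ℝ => x^n) 1
      simp only [sub_zero, sub_self] at h2
      rw [h2, integral_pow]
      simp
    rw [hval, ← ENNReal.ofReal_mul (by positivity)]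
    congr 1
    rw [Nat.factorial_succ]
    push_cast
    rw [div_mul_div_comm, one_mul]

noncomputable abbrev Euc (d : ℕ) := EuclideanSpace ℝ (Fin d)

def cornerE (d : ℕ) : Set (Euc d) := {x | (∀ i, 0 ≤ x i) ∧ ∑ i, x i ≤ 1}

lemma volume_cornerE (d : ℕ) :
    volume (cornerE d) = ENNReal.ofReal (1 / d.factorial) := by
  have h := (EuclideanSpace.volume_preserving_symm_measurableEquiv_toLp (Fin d)).measure_preimage
    (isClosed_corner d).measurableSet.nullMeasurableSet
  have heq : (MeasurableEquiv.toLp 2 (Fin d → ℝ)).symm ⁻¹' (corner d) = cornerE d := rfl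
  rw [heq] at h
  rw [h, volume_corner]

lemma cornerE_eq_convexHull (d : ℕ) :
    cornerE d = convexHull ℝ
      (insert 0 (Set.range fun i => (EuclideanSpace.single i 1 : Euc d))) := by
  apply le_antisymm
  · intro x hx
    obtain ⟨h1, h2⟩ := hx
    set S := insert 0 (Set.range fun i => (EuclideanSpace.single i 1 : Euc d)) with hS
    set w : Option (Fin d) → ℝ := fun j => j.elim (1 - ∑ i, x i) (fun i => x i) with hw
    set z : Option (Fin d) → Euc d :=
      fun j => j.elim (0 : Euc d) (fun i => EuclideanSpace.single i 1) with hz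
    have hsum : ∑ j : Option (Fin d), w j • z j = x := by
      rw [Fintype.sum_option]
      have h0 : w none • z none = 0 := by simp [hw, hz]
      rw [h0, zero_add]
      apply PiLp.ext
      intro j
      rw [WithLp.ofLp_sum, Finset.sum_apply]
      simp only [hw, hz, Option.elim, PiLp.smul_apply, EuclideanSpace.single_apply,
        smul_eq_mul, mul_ite, mul_one, mul_zero]
      simp
    have hconv := (convex_convexHull ℝ S).sum_mem (t := Finset.univ)
      (w := w) (z := z)
      (fun j _ => by cases j with
        | none => simpa [hw] using h2
        | some i => exact h1 i)
      (by rw [Fintype.sum_option]; simp [hw])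
      (fun j _ => by cases j with
        | none => exact subset_convexHull ℝ S (Set.mem_insert _ _)
        | some i => exact subset_convexHull ℝ S (Set.mem_insert_of_mem _ ⟨i, rfl⟩))
    rw [hsum] at hconv
    exact hconv
  · apply convexHull_min
    · intro p hp
      rcases hp with rfl | ⟨i, rfl⟩
      · exact ⟨fun i => le_refl 0, by simp⟩
      · constructor
        · intro j
          simp only [EuclideanSpace.single_apply]
          positivity
        · simp [EuclideanSpace.single_apply]
    · have he : cornerE d = {x : Euc d | ∀ i, 0 ≤ x i} ∩ {x : Euc d | ∑ i, x i ≤ 1} := rfl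
      rw [he]
      apply Convex.inter
      · have h2 : {x : Euc d | ∀ i, 0 ≤ x i} = ⋂ i, {x : Euc d | 0 ≤ x i} := by ext; simp
        rw [h2]
        exact convex_iInter fun i =>
          convex_halfSpace_ge ⟨fun a b => rfl, fun c a => rfl⟩ 0
      · exact convex_halfSpace_le
          ⟨fun a b => by simp [Finset.sum_add_distrib],
           fun c a => by simp [Finset.mul_sum]⟩ 1

noncomputable def lmap {d : ℕ} (w : Fin d → Euc d) : Euc d →ₗ[ℝ] Euc d where
  toFun x := ∑ k, x k • w k
  map_add' x y := by
    simp only [PiLp.add_apply, add_smul]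
    rw [Finset.sum_add_distrib]
  map_smul' c x := by
    simp only [PiLp.smul_apply, smul_eq_mul, RingHom.id_apply, Finset.smul_sum, smul_smul]

lemma lmap_single {d : ℕ} (w : Fin d → Euc d) (i : Fin d) :
    lmap w (EuclideanSpace.single i 1) = w i := by
  simp only [lmap, LinearMap.coe_mk, AddHom.coe_mk]
  rw [Finset.sum_eq_single i]
  · simp [EuclideanSpace.single_apply]
  · intro k _ hk
    simp [EuclideanSpace.single_apply, hk]
  · simp

lemma lmap_det {d : ℕ} (w : Fin d → Euc d) :
    LinearMap.det (lmap w) = (Matrix.of fun i k => w k i).det := by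
  classical
  let b := (EuclideanSpace.basisFun (Fin d) ℝ).toBasis
  rw [← LinearMap.det_toMatrix b]
  congr 1
  ext i k
  rw [LinearMap.toMatrix_apply]
  have hb : b k = EuclideanSpace.single k 1 := by
    rw [OrthonormalBasis.coe_toBasis, EuclideanSpace.basisFun_apply]
  rw [hb, lmap_single]
  rfl

lemma volume_simplex {d : ℕ} (w : Fin d → Euc d) :
    volume (convexHull ℝ (insert 0 (Set.range w)))
      = ENNReal.ofReal (|(Matrix.of fun i k => w k i).det| / d.factorial) := by
  have himg : lmap w '' cornerE d = convexHull ℝ (insert 0 (Set.range w)) := by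
    rw [cornerE_eq_convexHull, LinearMap.image_convexHull]
    congr 1
    have hc : (⇑(lmap w) ∘ fun i => (EuclideanSpace.single i 1 : Euc d)) = w :=
      funext fun i => lmap_single w i
    rw [Set.image_insert_eq, map_zero, ← Set.range_comp, hc]
  rw [← himg, Measure.addHaar_image_linearMap, volume_cornerE, lmap_det,
    ← ENNReal.ofReal_mul (abs_nonneg _)]
  congr 1
  rw [mul_one_div]

noncomputable def cvec (R : Matrix (Fin d) (Fin (d+1)) ℝ) : Fin (d+1) → ℝ :=
  fun j => (-1 : ℝ)^(j : ℕ) * (R.submatrix id j.succAbove).det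

lemma det_cons (R : Matrix (Fin d) (Fin (d+1)) ℝ) (u : Fin (d+1) → ℝ) :
    (Matrix.of (Fin.cons u R) : Matrix (Fin (d+1)) (Fin (d+1)) ℝ).det
      = ∑ j, u j * cvec R j := by
  rw [Matrix.det_succ_row_zero]
  refine Finset.sum_congr rfl fun j _ => ?_
  have h1 : (Matrix.of (Fin.cons u R) : Matrix (Fin (d+1)) (Fin (d+1)) ℝ) 0 j = u j := rfl
  have h2 : (Matrix.of (Fin.cons u R) : Matrix (Fin (d+1)) (Fin (d+1)) ℝ).submatrix
      Fin.succ j.succAbove = R.submatrix id j.succAbove := by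
    ext i k; rfl
  rw [h1, h2, cvec]; ring

lemma det_cons_row (R : Matrix (Fin d) (Fin (d+1)) ℝ) (i : Fin d) :
    (Matrix.of (Fin.cons (R i) R) : Matrix (Fin (d+1)) (Fin (d+1)) ℝ).det = 0 := by
  apply Matrix.det_zero_of_row_eq (i := 0) (j := i.succ)
  · exact (Fin.succ_ne_zero i).symm
  · ext k
    rfl

lemma sum_sq_cvec_le (R : Matrix (Fin d) (Fin (d+1)) ℝ) :
    ∑ j, (cvec R j)^2 ≤ (R * Rᵀ).det := by
  classical
  set c := cvec R
  set A : Matrix (Fin (d+1)) (Fin (d+1)) ℝ := Matrix.of (Fin.cons c R) with hA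
  have hFc : A.det = ∑ j, c j ^ 2 := by
    rw [hA, det_cons]
    exact Finset.sum_congr rfl fun j _ => (sq (c j)).symm
  set G := R * Rᵀ with hG
  have hB00 : (A * Aᵀ) 0 0 = ∑ j, c j ^ 2 := by
    simp [Matrix.mul_apply, hA, sq]; rfl
  have hB0succ : ∀ j : Fin d, (A * Aᵀ) 0 j.succ = 0 := by
    intro j
    have : (A * Aᵀ) 0 j.succ = ∑ k, c k * R j k := by
      simp [Matrix.mul_apply, hA, mul_comm]; rfl
    rw [this]
    have h0 := det_cons R (R j)
    rw [det_cons_row] at h0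
    rw [show (∑ k, c k * R j k) = ∑ k, R j k * cvec R k from
      Finset.sum_congr rfl fun k _ => mul_comm _ _, ← h0]
  have hBsucc0 : ∀ i : Fin d, (A * Aᵀ) i.succ 0 = 0 := by
    intro i
    have h1 : (A * Aᵀ) i.succ 0 = (A * Aᵀ) 0 i.succ := by
      simp [Matrix.mul_apply, mul_comm]
    rw [h1]; exact hB0succ i
  have hBsucc : ∀ i j : Fin d, (A * Aᵀ) i.succ j.succ = G i j := by
    intro i j
    simp [Matrix.mul_apply, hA, hG]; rfl
  have hdetB : (A * Aᵀ).det = (∑ j, c j ^ 2) * G.det := by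
    rw [Matrix.det_succ_row_zero]
    rw [Finset.sum_eq_single (0 : Fin (d+1))]
    · rw [hB00]
      have hsub : (A * Aᵀ).submatrix Fin.succ (0 : Fin (d+1)).succAbove = G := by
        ext i j
        rw [Matrix.submatrix_apply, Fin.succAbove_zero]
        exact hBsucc i j
      rw [hsub]
      simp
    · intro j _ hj
      rcases Fin.eq_succ_of_ne_zero hj with ⟨j', rfl⟩
      rw [hB0succ j']
      ring
    · simp
  have hdetB' : (A * Aᵀ).det = (∑ j, c j ^ 2)^2 := by
    rw [Matrix.det_mul, Matrix.det_transpose, hFc, sq]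
  have hGnn : 0 ≤ G.det := by
    have hpsd : (R * Rᴴ).PosSemidef := Matrix.posSemidef_self_mul_conjTranspose R
    rw [Matrix.conjTranspose_eq_transpose_of_trivial] at hpsd
    rw [hpsd.isHermitian.det_eq_prod_eigenvalues]
    exact Finset.prod_nonneg fun i _ => hpsd.eigenvalues_nonneg i
  have hx : 0 ≤ ∑ j, c j ^ 2 := Finset.sum_nonneg fun j _ => sq_nonneg _
  have key : (∑ j, c j ^ 2)^2 = (∑ j, c j ^ 2) * G.det := by rw [← hdetB', hdetB]
  rcases eq_or_lt_of_le hx with h | h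
  · rw [← h]; exact hGnn
  · have h2 : (∑ j, c j ^ 2) * (∑ j, c j ^ 2) = (∑ j, c j ^ 2) * G.det := by
      rw [← sq]; exact key
    exact (mul_left_cancel₀ (ne_of_gt h) h2).le

lemma trace_eq_sum_eigenvalues {n : ℕ} {G : Matrix (Fin n) (Fin n) ℝ}
    (hG : G.IsHermitian) : G.trace = ∑ i, hG.eigenvalues i := by
  classical
  simpa using hG.trace_eq_sum_eigenvalues

lemma det_le_trace_div_pow {n : ℕ} (hn : 0 < n) {G : Matrix (Fin n) (Fin n) ℝ}
    (hpsd : G.PosSemidef) : G.det ≤ (G.trace / n)^n := by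
  classical
  have hG := hpsd.isHermitian
  set lam := hG.eigenvalues with hlam
  have hnn : ∀ i, 0 ≤ lam i := fun i => hpsd.eigenvalues_nonneg i
  have hdet : G.det = ∏ i, lam i := hG.det_eq_prod_eigenvalues
  have htr : G.trace = ∑ i, lam i := trace_eq_sum_eigenvalues hG
  rw [hdet, htr]
  have hw : ∑ _i : Fin n, (1 / n : ℝ) = 1 := by
    rw [Finset.sum_const]
    simp only [Finset.card_univ, Fintype.card_fin, nsmul_eq_mul]
    field_simp
  have amgm := Real.geom_mean_le_arith_mean_weighted Finset.univ
    (fun _ => (1 / n : ℝ)) lam (fun i _ => by positivity) hw (fun i _ => hnn i)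
  -- amgm : ∏ i, lam i ^ (1/n : ℝ) ≤ ∑ i, (1/n) * lam i
  have hLHS : (∏ i, lam i ^ (1 / n : ℝ))^n = ∏ i, lam i := by
    rw [← Finset.prod_pow]
    refine Finset.prod_congr rfl fun i _ => ?_
    rw [← Real.rpow_natCast (lam i ^ (1 / n : ℝ)) n, ← Real.rpow_mul (hnn i)]
    rw [one_div, inv_mul_cancel₀ (by exact_mod_cast hn.ne' : (n:ℝ) ≠ 0), Real.rpow_one]
  have hRHS : ∑ i, (1 / n : ℝ) * lam i = (∑ i, lam i) / n := by
    rw [← Finset.mul_sum]; ring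
  calc ∏ i, lam i = (∏ i, lam i ^ (1 / n : ℝ))^n := hLHS.symm
    _ ≤ (∑ i, (1 / n : ℝ) * lam i)^n := by
        apply pow_le_pow_left₀ (Finset.prod_nonneg fun i _ => Real.rpow_nonneg (hnn i) _) amgm
    _ = ((∑ i, lam i) / n)^n := by rw [hRHS]

/-- For a simplex `T = conv {v 1, …, v (d+1)}` inscribed in the unit sphere
of `ℝ^d` with the origin in its interior, with `T j` the simplex obtained by replacing the
vertex `v j` with the origin, one has
`(∑ j, vol_d(T j)²)^{1/2} ≤ (1/d!) (1 + 1/d)^{d/2}`. -/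
theorem stmt_0 (d : ℕ) (hd : 1 ≤ d) (v : Fin (d + 1) → EuclideanSpace ℝ (Fin d))
    (h_ind : AffineIndependent ℝ v) (h_sph : ∀ j, ‖v j‖ = 1)
    (h_int : (0 : EuclideanSpace ℝ (Fin d)) ∈ interior (convexHull ℝ (Set.range v))) :
    Real.sqrt (∑ j : Fin (d + 1),
        (volume (convexHull ℝ
          (insert (0 : EuclideanSpace ℝ (Fin d)) (v '' {i | i ≠ j})))).toReal ^ 2) ≤
      (1 / (Nat.factorial d : ℝ)) * (1 + 1 / (d : ℝ)) ^ ((d : ℝ) / 2) := by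
  classical
  set R : Matrix (Fin d) (Fin (d+1)) ℝ := Matrix.of fun i j => v j i with hR
  have hdpos : (0:ℝ) < d := by exact_mod_cast hd
  have hfacpos : (0:ℝ) < d.factorial := by exact_mod_cast d.factorial_pos
  -- volume of each sub-simplex
  have hvol : ∀ j : Fin (d+1),
      (volume (convexHull ℝ (insert (0 : EuclideanSpace ℝ (Fin d)) (v '' {i | i ≠ j})))).toReal
        = |(R.submatrix id j.succAbove).det| / d.factorial := by
    intro j
    have hset : v '' {i | i ≠ j} = Set.range (fun k => v (j.succAbove k)) := by
      have h1 : {i : Fin (d+1) | i ≠ j} = Set.range j.succAbove := by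
        rw [Fin.range_succAbove]; rfl
      rw [h1, ← Set.range_comp]; rfl
    rw [hset, volume_simplex (fun k => v (j.succAbove k))]
    have hM : (Matrix.of fun i k => (v (j.succAbove k)) i) = R.submatrix id j.succAbove := rfl
    rw [hM, ENNReal.toReal_ofReal (by positivity)]
  -- trace of R * Rᵀ
  have htrace : (R * Rᵀ).trace = (d:ℝ) + 1 := by
    have hnorm : ∀ j : Fin (d+1), ∑ i, (v j i)^2 = 1 := by
      intro j
      have h := h_sph j
      rw [EuclideanSpace.norm_eq] at h
      have h2 : ∑ i, ‖v j i‖^2 = 1 := Real.sqrt_eq_one.mp h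
      rw [← h2]
      exact Finset.sum_congr rfl fun i _ => by rw [Real.norm_eq_abs, sq_abs]
    rw [Matrix.trace]
    have : ∀ i : Fin d, (R * Rᵀ).diag i = ∑ j, (v j i)^2 := by
      intro i
      simp [Matrix.diag, Matrix.mul_apply, hR, sq]
    rw [Finset.sum_congr rfl fun i _ => this i, Finset.sum_comm]
    rw [Finset.sum_congr rfl fun j _ => hnorm j]
    simp
  -- the key bound
  have hkey : ∑ j : Fin (d+1), ((R.submatrix id j.succAbove).det)^2 ≤ (1 + 1/(d:ℝ))^d := by
    have h1 : ∑ j : Fin (d+1), ((R.submatrix id j.succAbove).det)^2 = ∑ j : Fin (d+1), (cvec R j)^2 := by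
      refine Finset.sum_congr rfl fun j _ => ?_
      rw [cvec, mul_pow, ← pow_mul, mul_comm (j:ℕ) 2, pow_mul, neg_one_sq, one_pow, one_mul]
    rw [h1]
    refine le_trans (sum_sq_cvec_le R) (le_trans (det_le_trace_div_pow hd
      (by
        have hpsd : (R * Rᴴ).PosSemidef := Matrix.posSemidef_self_mul_conjTranspose R
        rwa [Matrix.conjTranspose_eq_transpose_of_trivial] at hpsd)) ?_)
    rw [htrace]
    have : ((d:ℝ) + 1) / d = 1 + 1/(d:ℝ) := by field_simp
    rw [this]
  -- assemble
  have hsum : ∑ j : Fin (d+1),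
      (volume (convexHull ℝ (insert (0 : EuclideanSpace ℝ (Fin d)) (v '' {i | i ≠ j})))).toReal ^ 2
      = (∑ j : Fin (d+1), ((R.submatrix id j.succAbove).det)^2) / (d.factorial:ℝ)^2 := by
    rw [Finset.sum_div]
    refine Finset.sum_congr rfl fun j _ => ?_
    rw [hvol j, div_pow, sq_abs]
  rw [hsum]
  rw [Real.sqrt_div (Finset.sum_nonneg fun j _ => sq_nonneg _)]
  rw [Real.sqrt_sq hfacpos.le]
  rw [div_le_iff₀ hfacpos, mul_comm (1 / (d.factorial:ℝ)) _, mul_assoc]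
  rw [one_div_mul_cancel hfacpos.ne', mul_one]
  have hbase : (0:ℝ) ≤ 1 + 1/(d:ℝ) := by positivity
  calc Real.sqrt (∑ j : Fin (d+1), ((R.submatrix id j.succAbove).det)^2)
      ≤ Real.sqrt ((1 + 1/(d:ℝ))^d) := Real.sqrt_le_sqrt hkey
    _ = (1 + 1/(d:ℝ)) ^ ((d:ℝ)/2) := by
        rw [Real.sqrt_eq_rpow, ← Real.rpow_natCast (1 + 1/(d:ℝ)) d, ← Real.rpow_mul hbase,
          mul_one_div]
end

section
/- Let d ≥ 2 and let T = conv{v_1, …, v_{d+1}} ∈ P_d be a simplex inscribed in the unit sphere of ℝ^d with the origin in its interior. For each j let F_j = conv{v_k : k ≠ j} and let m_j ∈ ℝ^d be the outward facet normal with ⟨m_j, v_k − v_l⟩ = 0 for all k, l ≠ j, ⟨m_j, v_j − v_k⟩ < 0 for k ≠ j, and ‖m_j‖ = μH^{d−1}(F_j). Then (Σ_{i=1}^{d+1} vol_d(conv({0} ∪ {m_j : j ≠ i}))²)^{1/2} ≤ (1/(d! · d^{d/2})) · (Σ_{j=1}^{d+1} μH^{d−1}(F_j)²)^{d/2}. 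-/
open MeasureTheory Matrix
open scoped ENNReal

section Aux

/-- Coordinates of `Matrix.toEuclideanLin`. -/
private lemma toEuclideanLin_apply_coord {d : ℕ} (M : Matrix (Fin d) (Fin d) ℝ)
    (x : EuclideanSpace ℝ (Fin d)) (i : Fin d) :
    (Matrix.toEuclideanLin M x) i = ∑ k, M i k * x k := rfl

/-- The unit cube in Euclidean space has volume one. -/
private lemma cube_volume (d : ℕ) :
    volume {x : EuclideanSpace ℝ (Fin d) | ∀ i, x i ∈ Set.Icc (0:ℝ) 1} = 1 := by
  have hpre : {x : EuclideanSpace ℝ (Fin d) | ∀ i, x i ∈ Set.Icc (0:ℝ) 1}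
      = (MeasurableEquiv.toLp 2 (Fin d → ℝ)).symm ⁻¹' (Set.univ.pi fun _ => Set.Icc (0:ℝ) 1) := by
    ext x
    simp only [Set.mem_preimage, Set.mem_pi, Set.mem_univ, forall_true_left, Set.mem_setOf_eq]
    rfl
  rw [hpre, (EuclideanSpace.volume_preserving_symm_measurableEquiv_toLp (Fin d)).measure_preimage
    ((MeasurableSet.univ_pi fun _ => measurableSet_Icc).nullMeasurableSet)]
  rw [volume_pi_pi]
  simp [Real.volume_Icc]

/-- Diagonal hyperplanes are null. -/
private lemma hyperplane_volume {d : ℕ} {i j : Fin d} (hij : i ≠ j) :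
    volume {x : EuclideanSpace ℝ (Fin d) | x i = x j} = 0 := by
  let f : EuclideanSpace ℝ (Fin d) →ₗ[ℝ] ℝ :=
    { toFun := fun x => x i - x j
      map_add' := fun x y => by simp [PiLp.add_apply]; ring
      map_smul' := fun c x => by simp [PiLp.smul_apply, smul_eq_mul]; ring }
  have h1 : {x : EuclideanSpace ℝ (Fin d) | x i = x j} = (LinearMap.ker f : Set _) := by
    ext x
    simp only [Set.mem_setOf_eq, SetLike.mem_coe, LinearMap.mem_ker]
    show x i = x j ↔ x i - x j = 0
    rw [sub_eq_zero]
  have hmem : EuclideanSpace.single i (1:ℝ) ∉ LinearMap.ker f := by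
    simp only [LinearMap.mem_ker]
    show ¬((EuclideanSpace.single i (1:ℝ)) i - (EuclideanSpace.single i (1:ℝ)) j = 0)
    rw [EuclideanSpace.single_apply, EuclideanSpace.single_apply, if_pos rfl, if_neg hij.symm]
    norm_num
  rw [h1]
  exact Measure.addHaar_submodule _ _ (fun h => hmem (h ▸ Submodule.mem_top))

private lemma volume_permSet {d : ℕ} (σ : Equiv.Perm (Fin d)) :
    volume {y : EuclideanSpace ℝ (Fin d) |
        (∀ i, y i ∈ Set.Icc (0:ℝ) 1) ∧ ∀ i j : Fin d, i ≤ j → y (σ j) ≤ y (σ i)}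
      = volume {y : EuclideanSpace ℝ (Fin d) |
        (∀ i, y i ∈ Set.Icc (0:ℝ) 1) ∧ ∀ i j : Fin d, i ≤ j → y j ≤ y i} := by
  classical
  set L := Matrix.toEuclideanLin (Equiv.Perm.permMatrix ℝ σ⁻¹) with hLdef
  have hL : ∀ (y : EuclideanSpace ℝ (Fin d)) (i : Fin d), (L y) i = y (σ⁻¹ i) := by
    intro y i
    rw [hLdef, toEuclideanLin_apply_coord]
    have : ∀ k, (Equiv.Perm.permMatrix ℝ σ⁻¹) i k * y k = if σ⁻¹ i = k then y k else 0 := by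
      intro k
      simp [Equiv.Perm.permMatrix, PEquiv.toMatrix_apply, Equiv.toPEquiv_apply, ite_mul]
    rw [Finset.sum_congr rfl fun k _ => this k, Finset.sum_ite_eq]
    simp
  have himg : {y : EuclideanSpace ℝ (Fin d) |
        (∀ i, y i ∈ Set.Icc (0:ℝ) 1) ∧ ∀ i j : Fin d, i ≤ j → y (σ j) ≤ y (σ i)}
      = L '' {y : EuclideanSpace ℝ (Fin d) |
        (∀ i, y i ∈ Set.Icc (0:ℝ) 1) ∧ ∀ i j : Fin d, i ≤ j → y j ≤ y i} := by
    ext z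
    constructor
    · rintro ⟨hz1, hz2⟩
      refine ⟨(WithLp.equiv 2 _).symm (fun k => z (σ k)), ⟨?_, ?_⟩, ?_⟩
      · intro i
        simp only [WithLp.equiv_symm_apply, PiLp.toLp_apply]
        exact hz1 _
      · intro i j hij
        simp only [WithLp.equiv_symm_apply, PiLp.toLp_apply]
        exact hz2 i j hij
      · apply PiLp.ext
        intro i
        rw [hL, WithLp.equiv_symm_apply, PiLp.toLp_apply, Equiv.Perm.inv_def, Equiv.apply_symm_apply]
    · rintro ⟨y, ⟨hy1, hy2⟩, rfl⟩
      constructor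
      · intro i; rw [hL]; exact hy1 _
      · intro i j hij
        rw [hL, hL, Equiv.Perm.inv_def, Equiv.symm_apply_apply, Equiv.symm_apply_apply]
        exact hy2 i j hij
  rw [himg, Measure.addHaar_image_linearMap]
  have hdet : |LinearMap.det L| = 1 := by
    have h1 : LinearMap.det L = Matrix.det (Equiv.Perm.permMatrix ℝ σ⁻¹) := by
      rw [hLdef, Matrix.toEuclideanLin_eq_toLin, LinearMap.det_toLin]
    rw [h1, Matrix.det_permutation]
    rcases Int.units_eq_one_or (Equiv.Perm.sign σ⁻¹) with h | h <;> rw [h] <;> norm_num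
  rw [hdet]
  simp

private lemma volume_orderSimplex (d : ℕ) :
    volume {y : EuclideanSpace ℝ (Fin d) |
        (∀ i, y i ∈ Set.Icc (0:ℝ) 1) ∧ ∀ i j : Fin d, i ≤ j → y j ≤ y i}
      ≤ ((Nat.factorial d : ℕ) : ℝ≥0∞)⁻¹ := by
  classical
  have hev : ∀ i : Fin d, Measurable (fun x : EuclideanSpace ℝ (Fin d) => x i) := fun i =>
    (measurable_pi_apply i).comp (WithLp.measurable_ofLp 2 (Fin d → ℝ))
  set S : Set (EuclideanSpace ℝ (Fin d)) :=
    {y | (∀ i, y i ∈ Set.Icc (0:ℝ) 1) ∧ ∀ i j : Fin d, i ≤ j → y j ≤ y i} with hS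
  set A : Equiv.Perm (Fin d) → Set (EuclideanSpace ℝ (Fin d)) := fun σ =>
    {y | (∀ i, y i ∈ Set.Icc (0:ℝ) 1) ∧ ∀ i j : Fin d, i ≤ j → y (σ j) ≤ y (σ i)} with hA
  have hmeas : ∀ σ, MeasurableSet (A σ) := by
    intro σ
    have : A σ = (⋂ i, (fun y : EuclideanSpace ℝ (Fin d) => y i) ⁻¹' (Set.Icc (0:ℝ) 1)) ∩
        (⋂ i, ⋂ j, ⋂ (_ : i ≤ j), {y : EuclideanSpace ℝ (Fin d) | y (σ j) ≤ y (σ i)}) := by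
      ext y
      simp [hA, Set.mem_iInter]
    rw [this]
    exact (MeasurableSet.iInter fun i => (hev i) measurableSet_Icc).inter
      (MeasurableSet.iInter fun i => MeasurableSet.iInter fun j => MeasurableSet.iInter fun _ =>
        measurableSet_le (hev (σ j)) (hev (σ i)))
  have hN : volume (⋃ (i : Fin d), ⋃ (j : Fin d), ⋃ (_ : i ≠ j),
      {y : EuclideanSpace ℝ (Fin d) | y i = y j}) = 0 :=
    measure_iUnion_null fun i => measure_iUnion_null fun j =>
      measure_iUnion_null fun hij => hyperplane_volume hij
  have hsub : ∀ σ τ : Equiv.Perm (Fin d), σ ≠ τ → A σ ∩ A τ ⊆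
      ⋃ (i : Fin d), ⋃ (j : Fin d), ⋃ (_ : i ≠ j),
        {y : EuclideanSpace ℝ (Fin d) | y i = y j} := by
    intro σ τ hστ y hy
    by_contra hyN
    simp only [Set.mem_iUnion, Set.mem_setOf_eq, not_exists] at hyN
    have hinj : Function.Injective y := by
      intro a b hab
      by_contra hne
      exact hyN a b hne hab
    have hstrict : ∀ (ρ : Equiv.Perm (Fin d)), y ∈ A ρ →
        StrictMono (fun k => -(y (ρ k))) := by
      intro ρ hyρ k l hkl
      have h1 : y (ρ l) ≤ y (ρ k) := hyρ.2 k l hkl.le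
      have h2 : y (ρ l) ≠ y (ρ k) := fun h => hkl.ne (ρ.injective (hinj h)).symm
      have : y (ρ l) < y (ρ k) := lt_of_le_of_ne h1 h2
      simpa using neg_lt_neg this
    have hrangeaux : ∀ ρ : Equiv.Perm (Fin d),
        Set.range (fun k => -(y (ρ k))) = Set.range (fun k => -(y k)) := by
      intro ρ
      exact Function.Surjective.range_comp ρ.surjective (fun k => -(y k))
    have hrange : Set.range (fun k => -(y (σ k))) = Set.range (fun k => -(y (τ k))) := by
      rw [hrangeaux σ, hrangeaux τ]
    haveI : WellFoundedLT (Fin d) := inferInstance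
    have hfg := (StrictMono.range_inj (hstrict σ hy.1) (hstrict τ hy.2)).mp hrange
    exact hστ (Equiv.ext fun k => hinj (neg_injective (congr_fun hfg k)))
  have hdisj : ((Finset.univ : Finset (Equiv.Perm (Fin d))) : Set (Equiv.Perm (Fin d))).Pairwise
      (Function.onFun (AEDisjoint volume) A) :=
    fun σ _ τ _ hστ => measure_mono_null (hsub σ τ hστ) hN
  have hsum := measure_biUnion_finset₀ hdisj (fun σ _ => (hmeas σ).nullMeasurableSet)
  have hvolA : ∀ σ, volume (A σ) = volume S := fun σ => volume_permSet σ
  have hcube : (⋃ σ ∈ (Finset.univ : Finset (Equiv.Perm (Fin d))), A σ) ⊆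
      {x : EuclideanSpace ℝ (Fin d) | ∀ i, x i ∈ Set.Icc (0:ℝ) 1} := by
    intro y hy
    simp only [Set.mem_iUnion] at hy
    obtain ⟨σ, _, hyσ⟩ := hy
    exact hyσ.1
  have hkey : ((Nat.factorial d : ℕ) : ℝ≥0∞) * volume S ≤ 1 := by
    calc ((Nat.factorial d : ℕ) : ℝ≥0∞) * volume S
        = ∑ σ : Equiv.Perm (Fin d), volume (A σ) := by
          rw [Finset.sum_congr rfl fun σ _ => hvolA σ, Finset.sum_const, Finset.card_univ,
            Fintype.card_perm, Fintype.card_fin, nsmul_eq_mul]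
      _ = volume (⋃ σ ∈ (Finset.univ : Finset (Equiv.Perm (Fin d))), A σ) := hsum.symm
      _ ≤ volume {x : EuclideanSpace ℝ (Fin d) | ∀ i, x i ∈ Set.Icc (0:ℝ) 1} :=
          measure_mono hcube
      _ = 1 := cube_volume d
  have h0 : ((Nat.factorial d : ℕ) : ℝ≥0∞) ≠ 0 := by
    simp [Nat.factorial_ne_zero]
  have htop : ((Nat.factorial d : ℕ) : ℝ≥0∞) ≠ ⊤ := by simp
  calc volume S = ((Nat.factorial d : ℕ) : ℝ≥0∞)⁻¹ * (((Nat.factorial d : ℕ) : ℝ≥0∞) * volume S) := by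
        rw [← mul_assoc, ENNReal.inv_mul_cancel h0 htop, one_mul]
    _ ≤ ((Nat.factorial d : ℕ) : ℝ≥0∞)⁻¹ * 1 := by gcongr
    _ = ((Nat.factorial d : ℕ) : ℝ≥0∞)⁻¹ := mul_one _

private lemma corner_volume (d : ℕ) :
    volume (convexHull ℝ (insert (0 : EuclideanSpace ℝ (Fin d))
      (Set.range fun k : Fin d => EuclideanSpace.single k (1:ℝ)))) ≤ ((Nat.factorial d : ℕ) : ℝ≥0∞)⁻¹ := by
  classical
  set Δ' : Set (EuclideanSpace ℝ (Fin d)) := {x | (∀ i, 0 ≤ x i) ∧ ∑ i, x i ≤ 1} with hΔ'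
  have hconv : Convex ℝ Δ' := by
    intro x hx y hy a b ha hb hab
    have hcoord : ∀ i, (a • x + b • y) i = a * x i + b * y i := by
      intro i
      simp [PiLp.add_apply, PiLp.smul_apply, smul_eq_mul]
    constructor
    · intro i
      rw [hcoord]
      exact add_nonneg (mul_nonneg ha (hx.1 i)) (mul_nonneg hb (hy.1 i))
    · calc ∑ i, (a • x + b • y) i = a * ∑ i, x i + b * ∑ i, y i := by
            rw [Finset.sum_congr rfl fun i _ => hcoord i, Finset.sum_add_distrib,
              ← Finset.mul_sum, ← Finset.mul_sum]
        _ ≤ a * 1 + b * 1 := by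
            gcongr
            · exact hx.2
            · exact hy.2
        _ = 1 := by rw [mul_one, mul_one, hab]
  have hsubset : convexHull ℝ (insert (0 : EuclideanSpace ℝ (Fin d))
      (Set.range fun k : Fin d => EuclideanSpace.single k (1:ℝ))) ⊆ Δ' := by
    apply convexHull_min ?_ hconv
    rintro x (rfl | ⟨k, rfl⟩)
    · constructor
      · intro i; simp
      · simp
    · show (∀ i, 0 ≤ (EuclideanSpace.single k (1:ℝ)) i) ∧
        ∑ i, (EuclideanSpace.single k (1:ℝ)) i ≤ 1
      constructor
      · intro i
        rw [EuclideanSpace.single_apply]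
        split <;> norm_num
      · have h1 : ∀ i, (EuclideanSpace.single k (1:ℝ)) i = if i = k then (1:ℝ) else 0 :=
          fun i => EuclideanSpace.single_apply k 1 i
        rw [Finset.sum_congr rfl fun i _ => h1 i, Finset.sum_ite_eq']
        simp
  set U : Matrix (Fin d) (Fin d) ℝ := Matrix.of fun i k => if i ≤ k then (1:ℝ) else 0 with hU
  set H := Matrix.toEuclideanLin U with hHdef
  have hHcoord : ∀ (x : EuclideanSpace ℝ (Fin d)) (i : Fin d),
      (H x) i = ∑ k ∈ Finset.univ.filter (fun k => i ≤ k), x k := by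
    intro x i
    rw [hHdef, toEuclideanLin_apply_coord, Finset.sum_filter]
    refine Finset.sum_congr rfl fun k _ => ?_
    by_cases h : i ≤ k <;> simp [hU, h]
  have hdetU : U.det = 1 := by
    rw [Matrix.det_of_upperTriangular]
    · refine Finset.prod_eq_one fun i _ => by simp [hU]
    · intro i j hij
      simp only [id_eq] at hij
      simp only [hU, Matrix.of_apply]
      rw [if_neg (not_le.mpr hij)]
  have himage : H '' Δ' ⊆ {y : EuclideanSpace ℝ (Fin d) |
      (∀ i, y i ∈ Set.Icc (0:ℝ) 1) ∧ ∀ i j : Fin d, i ≤ j → y j ≤ y i} := by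
    rintro _ ⟨x, hx, rfl⟩
    constructor
    · intro i
      constructor
      · rw [hHcoord]
        exact Finset.sum_nonneg fun k _ => hx.1 k
      · rw [hHcoord]
        calc ∑ k ∈ Finset.univ.filter (fun k => i ≤ k), x k ≤ ∑ k, x k :=
              Finset.sum_le_sum_of_subset_of_nonneg (Finset.filter_subset _ _)
                (fun k _ _ => hx.1 k)
          _ ≤ 1 := hx.2
    · intro i j hij
      rw [hHcoord, hHcoord]
      apply Finset.sum_le_sum_of_subset_of_nonneg
      · intro k hk
        simp only [Finset.mem_filter, Finset.mem_univ, true_and] at hk ⊢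
        exact hij.trans hk
      · exact fun k _ _ => hx.1 k
  have hHvol : volume (H '' Δ') = volume Δ' := by
    rw [Measure.addHaar_image_linearMap]
    have hdetH : LinearMap.det H = U.det := by
      rw [hHdef, Matrix.toEuclideanLin_eq_toLin, LinearMap.det_toLin]
    rw [hdetH, hdetU]
    simp
  calc volume (convexHull ℝ (insert (0 : EuclideanSpace ℝ (Fin d))
          (Set.range fun k : Fin d => EuclideanSpace.single k (1:ℝ))))
      ≤ volume Δ' := measure_mono hsubset
    _ = volume (H '' Δ') := hHvol.symm
    _ ≤ volume {y : EuclideanSpace ℝ (Fin d) |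
          (∀ i, y i ∈ Set.Icc (0:ℝ) 1) ∧ ∀ i j : Fin d, i ≤ j → y j ≤ y i} :=
        measure_mono himage
    _ ≤ ((Nat.factorial d : ℕ) : ℝ≥0∞)⁻¹ := volume_orderSimplex d

/-- Volume bound for a simplex with a vertex at the origin. -/
private lemma simplex_vol_le {d : ℕ} (w : Fin d → EuclideanSpace ℝ (Fin d)) :
    (volume (convexHull ℝ (insert (0 : EuclideanSpace ℝ (Fin d)) (Set.range w)))).toReal
      ≤ |Matrix.det (Matrix.of fun i k => w k i)| / ((Nat.factorial d : ℕ) : ℝ) := by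
  classical
  set M : Matrix (Fin d) (Fin d) ℝ := Matrix.of fun i k => w k i with hM
  set L := Matrix.toEuclideanLin M with hLdef
  have hLw : ∀ k, L (EuclideanSpace.single k (1:ℝ)) = w k := by
    intro k
    apply PiLp.ext
    intro i
    rw [hLdef, toEuclideanLin_apply_coord]
    have : ∀ k', M i k' * (EuclideanSpace.single k (1:ℝ)) k' = if k' = k then w k i else 0 := by
      intro k'
      rw [EuclideanSpace.single_apply]
      split_ifs with h
      · subst h; simp [hM]
      · simp
    rw [Finset.sum_congr rfl fun k' _ => this k', Finset.sum_ite_eq']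
    simp
  have himg : convexHull ℝ (insert (0 : EuclideanSpace ℝ (Fin d)) (Set.range w))
      = L '' convexHull ℝ (insert (0 : EuclideanSpace ℝ (Fin d))
          (Set.range fun k : Fin d => EuclideanSpace.single k (1:ℝ))) := by
    rw [L.image_convexHull, Set.image_insert_eq, map_zero, ← Set.range_comp]
    have : (L ∘ fun k : Fin d => EuclideanSpace.single k (1:ℝ)) = w := funext hLw
    rw [this]
  rw [himg, Measure.addHaar_image_linearMap]
  have hdetL : LinearMap.det L = M.det := by
    rw [hLdef, Matrix.toEuclideanLin_eq_toLin, LinearMap.det_toLin]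
  have hne : ENNReal.ofReal |M.det| * (((Nat.factorial d : ℕ) : ℝ≥0∞))⁻¹ ≠ ⊤ :=
    ENNReal.mul_ne_top ENNReal.ofReal_ne_top
      (ENNReal.inv_ne_top.mpr (by simp [Nat.factorial_ne_zero]))
  have hle : ENNReal.ofReal |LinearMap.det L| * volume (convexHull ℝ
        (insert (0 : EuclideanSpace ℝ (Fin d))
          (Set.range fun k : Fin d => EuclideanSpace.single k (1:ℝ))))
      ≤ ENNReal.ofReal |M.det| * (((Nat.factorial d : ℕ) : ℝ≥0∞))⁻¹ := by
    rw [hdetL]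
    exact mul_le_mul_right (corner_volume d) _
  calc (ENNReal.ofReal |LinearMap.det L| * volume (convexHull ℝ
          (insert (0 : EuclideanSpace ℝ (Fin d))
            (Set.range fun k : Fin d => EuclideanSpace.single k (1:ℝ))))).toReal
      ≤ (ENNReal.ofReal |M.det| * (((Nat.factorial d : ℕ) : ℝ≥0∞))⁻¹).toReal := ENNReal.toReal_mono hne hle
    _ = |M.det| / ((Nat.factorial d : ℕ) : ℝ) := by
        rw [ENNReal.toReal_mul, ENNReal.toReal_ofReal (abs_nonneg _), ENNReal.toReal_inv,
          div_eq_mul_inv]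
        norm_num

/-- Trace of a real symmetric matrix is the sum of its eigenvalues. -/
private lemma trace_eq_sum_eigs {d : ℕ} {G : Matrix (Fin d) (Fin d) ℝ} (hH : G.IsHermitian) :
    G.trace = ∑ i, hH.eigenvalues i := by
  conv_lhs => rw [hH.spectral_theorem]
  rw [Unitary.conjStarAlgAut_apply, Matrix.trace_mul_cycle, (Matrix.mem_unitaryGroup_iff').mp (hH.eigenvectorUnitary).2,
    one_mul, Matrix.trace_diagonal]
  simp [Function.comp]

/-- Determinant of a real PSD matrix is at most `(trace/d)^d`. -/
private lemma det_psd_le {d : ℕ} (hd : d ≠ 0) {G : Matrix (Fin d) (Fin d) ℝ}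
    (hG : G.PosSemidef) : G.det ≤ (G.trace / d) ^ d := by
  have hH := hG.1
  have hnn : ∀ i, 0 ≤ hH.eigenvalues i := fun i => hG.eigenvalues_nonneg i
  have hdet : G.det = ∏ i, hH.eigenvalues i := by
    rw [hH.det_eq_prod_eigenvalues]
    norm_num
  have htr : G.trace = ∑ i, hH.eigenvalues i := trace_eq_sum_eigs hH
  rw [hdet, htr]
  have hd' : ((d : ℝ)) ≠ 0 := by exact_mod_cast hd
  have hw' : ∑ _i : Fin d, (d : ℝ)⁻¹ = 1 := by
    rw [Finset.sum_const, Finset.card_univ, Fintype.card_fin, nsmul_eq_mul]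
    field_simp
  have hgm := Real.geom_mean_le_arith_mean_weighted Finset.univ (fun _ => (d : ℝ)⁻¹)
    (fun i => hH.eigenvalues i) (fun _ _ => by positivity) hw' (fun i _ => hnn i)
  have hsum : ∑ i, (d : ℝ)⁻¹ * hH.eigenvalues i = (∑ i, hH.eigenvalues i) / d := by
    rw [← Finset.mul_sum]
    ring
  have hprod : (∏ i, hH.eigenvalues i ^ ((d : ℝ)⁻¹)) ^ d = ∏ i, hH.eigenvalues i := by
    rw [← Finset.prod_pow]
    refine Finset.prod_congr rfl fun i _ => ?_
    rw [← Real.rpow_natCast (hH.eigenvalues i ^ ((d:ℝ)⁻¹)) d, ← Real.rpow_mul (hnn i),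
      inv_mul_cancel₀ hd', Real.rpow_one]
  calc ∏ i, hH.eigenvalues i = (∏ i, hH.eigenvalues i ^ ((d : ℝ)⁻¹)) ^ d := hprod.symm
    _ ≤ ((∑ i, hH.eigenvalues i) / d) ^ d := by
        apply pow_le_pow_left₀ (Finset.prod_nonneg fun i _ => Real.rpow_nonneg (hnn i) _)
        rw [← hsum]
        exact hgm

/-- Special case of the Cauchy–Binet identity combined with AM–GM. -/
private lemma sum_det_sq_le {d : ℕ} (hd : d ≠ 0) (A : Matrix (Fin d) (Fin (d+1)) ℝ) :
    ∑ i : Fin (d+1), ((A.submatrix id (Fin.succAbove i)).det) ^ 2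
      ≤ ((∑ j : Fin (d+1), ∑ i : Fin d, A i j ^ 2) / d) ^ d := by
  classical
  set D : Fin (d+1) → ℝ := fun j => (A.submatrix id (Fin.succAbove j)).det with hD
  set c2 : ℝ := ∑ j, D j ^ 2 with hc2
  have hexp : ∀ r : Fin (d+1) → ℝ,
      (Matrix.of (Fin.cons r (fun i => A i))).det = ∑ j : Fin (d+1), (-1:ℝ)^(j:ℕ) * r j * D j := by
    intro r
    rw [Matrix.det_succ_row_zero]
    refine Finset.sum_congr rfl fun j _ => ?_
    have h1 : (Matrix.of (Fin.cons r (fun i => A i))) 0 j = r j := rfl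
    have h2 : (Matrix.of (Fin.cons r (fun i => A i))).submatrix Fin.succ (Fin.succAbove j)
        = A.submatrix id (Fin.succAbove j) := by
      ext a b
      simp [Matrix.submatrix_apply, Fin.cons_succ]
    rw [h1, h2]
  have hrow : ∀ a : Fin d, ∑ j : Fin (d+1), (-1:ℝ)^(j:ℕ) * A a j * D j = 0 := by
    intro a
    have h0 : (Matrix.of (Fin.cons (A a) (fun i => A i))).det = 0 := by
      apply Matrix.det_zero_of_row_eq (Fin.succ_ne_zero a).symm
      show (Fin.cons (A a) (fun i => A i) : Fin (d+1) → Fin (d+1) → ℝ) 0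
        = (Fin.cons (A a) (fun i => A i) : Fin (d+1) → Fin (d+1) → ℝ) a.succ
      rw [Fin.cons_zero, Fin.cons_succ]
    rw [hexp (A a)] at h0
    exact h0
  set r : Fin (d+1) → ℝ := fun j => (-1)^(j:ℕ) * D j with hr
  set B := Matrix.of (Fin.cons r (fun i => A i)) with hB
  have hsq : ∀ j : Fin (d+1), ((-1:ℝ)^(j:ℕ))^2 = 1 := by
    intro j
    rw [← pow_mul, mul_comm (j:ℕ) 2, pow_mul, neg_one_sq, one_pow]
  have hdetB : B.det = c2 := by
    rw [hB, hexp r, hc2]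
    refine Finset.sum_congr rfl fun j _ => ?_
    have : (-1:ℝ)^(j:ℕ) * r j * D j = ((-1:ℝ)^(j:ℕ))^2 * D j ^ 2 := by rw [hr]; ring
    rw [this, hsq, one_mul]
  set G := A * A.transpose with hG
  set C : Matrix (Fin (d+1)) (Fin (d+1)) ℝ :=
    Matrix.of (Fin.cons (Fin.cons c2 0) (fun a => Fin.cons 0 (fun b => G a b))) with hC
  have hBBt : B * Bᵀ = C := by
    ext i k
    rw [Matrix.mul_apply]
    simp only [Matrix.transpose_apply]
    induction i using Fin.cases with
    | zero =>
      induction k using Fin.cases with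
      | zero =>
        have hlhs : ∀ j, B 0 j * B 0 j = D j ^ 2 := by
          intro j
          have hB0 : B 0 j = r j := rfl
          rw [hB0, hr]
          have : ((-1:ℝ)^(j:ℕ) * D j) * ((-1:ℝ)^(j:ℕ) * D j) = ((-1:ℝ)^(j:ℕ))^2 * D j^2 := by
            ring
          rw [this, hsq, one_mul]
        rw [Finset.sum_congr rfl fun j _ => hlhs j]
        show c2 = C 0 0
        rfl
      | succ b =>
        have hlhs : ∀ j, B 0 j * B b.succ j = (-1:ℝ)^(j:ℕ) * A b j * D j := by
          intro j
          have hB0 : B 0 j = r j := rfl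
          have hBb : B b.succ j = A b j := rfl
          rw [hB0, hBb, hr]
          ring
        rw [Finset.sum_congr rfl fun j _ => hlhs j, hrow b]
        show (0:ℝ) = C 0 b.succ
        show (0:ℝ) = (Fin.cons c2 (0 : Fin d → ℝ) : Fin (d+1) → ℝ) b.succ
        rw [Fin.cons_succ]
        rfl
    | succ a =>
      induction k using Fin.cases with
      | zero =>
        have hlhs : ∀ j, B a.succ j * B 0 j = (-1:ℝ)^(j:ℕ) * A a j * D j := by
          intro j
          have hB0 : B 0 j = r j := rfl
          have hBa : B a.succ j = A a j := rfl
          rw [hB0, hBa, hr]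
          ring
        rw [Finset.sum_congr rfl fun j _ => hlhs j, hrow a]
        show (0:ℝ) = C a.succ 0
        show (0:ℝ) = (Fin.cons (Fin.cons c2 0) (fun a' => Fin.cons 0 (fun b' => G a' b'))
          : Fin (d+1) → Fin (d+1) → ℝ) a.succ 0
        rw [Fin.cons_succ, Fin.cons_zero]
      | succ b =>
        have hlhs : ∀ j, B a.succ j * B b.succ j = A a j * A b j := fun j => rfl
        rw [Finset.sum_congr rfl fun j _ => hlhs j]
        show ∑ j, A a j * A b j = C a.succ b.succ
        have hCval : C a.succ b.succ = G a b := by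
          show (Fin.cons (Fin.cons c2 0) (fun a' => Fin.cons 0 (fun b' => G a' b'))
            : Fin (d+1) → Fin (d+1) → ℝ) a.succ b.succ = G a b
          rw [Fin.cons_succ, Fin.cons_succ]
        rw [hCval, hG, Matrix.mul_apply]
        simp [Matrix.transpose_apply]
  have hdetC : C.det = c2 * G.det := by
    have hsubC : C.submatrix Fin.succ (Fin.succAbove (0 : Fin (d+1))) = G := by
      ext a b
      rw [Fin.succAbove_zero]
      show (Fin.cons (Fin.cons c2 0) (fun a' => Fin.cons 0 (fun b' => G a' b'))
        : Fin (d+1) → Fin (d+1) → ℝ) a.succ b.succ = G a b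
      rw [Fin.cons_succ, Fin.cons_succ]
    rw [Matrix.det_succ_row_zero, Fin.sum_univ_succ, hsubC]
    have hC00 : C 0 0 = c2 := rfl
    have hC0succ : ∀ j : Fin d, C 0 j.succ = 0 := by
      intro j
      show (Fin.cons c2 (0 : Fin d → ℝ) : Fin (d+1) → ℝ) j.succ = 0
      rw [Fin.cons_succ]
      rfl
    have hrest : ∀ j : Fin d, (-1:ℝ)^((j.succ : Fin (d+1)):ℕ) * C 0 j.succ *
        ((C.submatrix Fin.succ (Fin.succAbove j.succ)).det) = 0 := by
      intro j
      rw [hC0succ j]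
      ring
    rw [Finset.sum_congr rfl fun j _ => hrest j, Finset.sum_const, smul_zero, add_zero, hC00]
    simp
  have hmul : c2 * c2 = c2 * G.det := by
    calc c2 * c2 = B.det * B.det := by rw [hdetB]
      _ = B.det * Bᵀ.det := by rw [Matrix.det_transpose]
      _ = (B * Bᵀ).det := (Matrix.det_mul _ _).symm
      _ = C.det := by rw [hBBt]
      _ = c2 * G.det := hdetC
  have hRHS0 : (0:ℝ) ≤ (∑ j : Fin (d+1), ∑ i : Fin d, A i j ^ 2) / d :=
    div_nonneg (Finset.sum_nonneg fun j _ => Finset.sum_nonneg fun i _ => sq_nonneg _)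
      (Nat.cast_nonneg d)
  rcases eq_or_ne c2 0 with h0 | h0
  · calc ∑ j, D j ^ 2 = c2 := hc2.symm
      _ = 0 := h0
      _ ≤ _ := pow_nonneg hRHS0 d
  · have hc2G : c2 = G.det := mul_left_cancel₀ h0 hmul
    have hAH : Aᴴ = Aᵀ := by
      ext i j
      simp [Matrix.conjTranspose_apply]
    have hpsd : G.PosSemidef := by
      rw [hG, ← hAH]
      exact Matrix.posSemidef_self_mul_conjTranspose A
    have htrace : G.trace = ∑ j : Fin (d+1), ∑ i : Fin d, A i j ^ 2 := by
      have h1 : G.trace = ∑ i : Fin d, ∑ j : Fin (d+1), A i j ^ 2 := by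
        simp [Matrix.trace, Matrix.diag, hG, Matrix.mul_apply, sq]
      rw [h1, Finset.sum_comm]
    calc ∑ j, D j ^ 2 = c2 := hc2.symm
      _ = G.det := hc2G
      _ ≤ (G.trace / d) ^ d := det_psd_le hd hpsd
      _ = _ := by rw [htrace]

end Aux

/-- Let `T = conv {v 1, …, v (d+1)}` be a simplex inscribed in the unit
sphere of `ℝ^d` with the origin in its interior, and for each `j` let `m j` be the outward
facet normal of `F j = conv {v k : k ≠ j}` with `‖m j‖ = μH^{d-1}(F j)`.  Then
`(∑ i vol_d(conv({0} ∪ {m j : j ≠ i}))²)^{1/2} ≤ (1/(d! d^{d/2})) (∑ j μH^{d-1}(F j)²)^{d/2}`. -/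
theorem stmt_6 (d : ℕ) (hd : 2 ≤ d) (v : Fin (d + 1) → EuclideanSpace ℝ (Fin d))
    (h_ind : AffineIndependent ℝ v) (h_sph : ∀ j, ‖v j‖ = 1)
    (h_int : (0 : EuclideanSpace ℝ (Fin d)) ∈ interior (convexHull ℝ (Set.range v)))
    (m : Fin (d + 1) → EuclideanSpace ℝ (Fin d))
    (h_orth : ∀ j k l, k ≠ j → l ≠ j → (inner ℝ (m j) (v k - v l) : ℝ) = 0)
    (h_out : ∀ j k, k ≠ j → (inner ℝ (m j) (v j - v k) : ℝ) < 0)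
    (h_norm : ∀ j, ‖m j‖ = (μH[(d : ℝ) - 1] (convexHull ℝ (v '' {k | k ≠ j}))).toReal) :
    Real.sqrt (∑ i : Fin (d + 1),
        (volume (convexHull ℝ
          (insert (0 : EuclideanSpace ℝ (Fin d)) (m '' {j | j ≠ i})))).toReal ^ 2) ≤
      1 / ((Nat.factorial d : ℝ) * (d : ℝ) ^ ((d : ℝ) / 2)) *
        (∑ j : Fin (d + 1),
          (μH[(d : ℝ) - 1] (convexHull ℝ (v '' {k | k ≠ j}))).toReal ^ 2) ^ ((d : ℝ) / 2) := by
  classical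
  have hrw : ∀ j, (μH[(d : ℝ) - 1] (convexHull ℝ (v '' {k | k ≠ j}))).toReal = ‖m j‖ :=
    fun j => (h_norm j).symm
  simp only [hrw]
  have hd0 : d ≠ 0 := by omega
  set A : Matrix (Fin d) (Fin (d+1)) ℝ := Matrix.of fun i j => m j i with hA
  set T : ℝ := ∑ j, ‖m j‖ ^ 2 with hT
  have hT0 : 0 ≤ T := Finset.sum_nonneg fun j _ => sq_nonneg _
  have hTA : T = ∑ j : Fin (d+1), ∑ i : Fin d, A i j ^ 2 := by
    rw [hT]
    refine Finset.sum_congr rfl fun j _ => ?_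
    have h1 : ‖m j‖ = Real.sqrt (∑ i, (m j i)^2) := by
      rw [EuclideanSpace.norm_eq]
      congr 1
      refine Finset.sum_congr rfl fun i _ => ?_
      rw [Real.norm_eq_abs, sq_abs]
    rw [h1, Real.sq_sqrt (Finset.sum_nonneg fun i _ => sq_nonneg _)]
    rfl
  have hvol : ∀ i : Fin (d+1),
      (volume (convexHull ℝ (insert (0 : EuclideanSpace ℝ (Fin d)) (m '' {j | j ≠ i})))).toReal
        ≤ |(A.submatrix id (Fin.succAbove i)).det| / ((Nat.factorial d : ℕ) : ℝ) := by
    intro i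
    have hset : m '' {j | j ≠ i} = Set.range (fun k : Fin d => m (Fin.succAbove i k)) := by
      have h1 : {j | j ≠ i} = Set.range (Fin.succAbove i) := by
        rw [Fin.range_succAbove]
        ext j
        simp
      rw [h1, ← Set.range_comp]
      rfl
    rw [hset]
    have hbound := simplex_vol_le (fun k => m (Fin.succAbove i k))
    have hmat : (Matrix.of fun r k => m (Fin.succAbove i k) r) = A.submatrix id (Fin.succAbove i) :=
      rfl
    rw [hmat] at hbound
    exact hbound
  have hkey := sum_det_sq_le hd0 A
  have hfac : (0:ℝ) < ((Nat.factorial d : ℕ) : ℝ) := by exact_mod_cast Nat.factorial_pos d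
  have hstep1 : ∑ i : Fin (d+1), (volume (convexHull ℝ
        (insert (0 : EuclideanSpace ℝ (Fin d)) (m '' {j | j ≠ i})))).toReal ^ 2
      ≤ (T / d) ^ d / ((Nat.factorial d : ℕ) : ℝ)^2 := by
    calc ∑ i : Fin (d+1), (volume (convexHull ℝ
            (insert (0 : EuclideanSpace ℝ (Fin d)) (m '' {j | j ≠ i})))).toReal ^ 2
        ≤ ∑ i : Fin (d+1), (|(A.submatrix id (Fin.succAbove i)).det| / ((Nat.factorial d : ℕ) : ℝ))^2 :=
          Finset.sum_le_sum fun i _ => pow_le_pow_left₀ ENNReal.toReal_nonneg (hvol i) 2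
      _ = (∑ i : Fin (d+1), ((A.submatrix id (Fin.succAbove i)).det)^2) / ((Nat.factorial d : ℕ) : ℝ)^2 := by
          rw [Finset.sum_div]
          refine Finset.sum_congr rfl fun i _ => ?_
          rw [div_pow, sq_abs]
      _ ≤ (T / d) ^ d / ((Nat.factorial d : ℕ) : ℝ)^2 := by
          gcongr
          rw [hTA]
          exact hkey
  have hsqrt := Real.sqrt_le_sqrt hstep1
  have hTd0 : (0:ℝ) ≤ (T / d) ^ d := pow_nonneg (div_nonneg hT0 (Nat.cast_nonneg d)) d
  have heq : Real.sqrt ((T / d) ^ d / ((Nat.factorial d : ℕ) : ℝ)^2)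
      = 1 / (((Nat.factorial d : ℕ) : ℝ) * (d:ℝ) ^ ((d:ℝ)/2)) * T ^ ((d:ℝ)/2) := by
    rw [Real.sqrt_div hTd0, Real.sqrt_sq hfac.le]
    have h2 : Real.sqrt ((T / d) ^ d) = (T / d) ^ ((d:ℝ)/2) := by
      rw [Real.sqrt_eq_rpow, ← Real.rpow_natCast (T / (d:ℝ)) d,
        ← Real.rpow_mul (div_nonneg hT0 (Nat.cast_nonneg d))]
      congr 1
      ring
    rw [h2, Real.div_rpow hT0 (Nat.cast_nonneg d), div_div, one_div_mul_eq_div]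
    ring
  calc Real.sqrt (∑ i : Fin (d+1), (volume (convexHull ℝ
          (insert (0 : EuclideanSpace ℝ (Fin d)) (m '' {j | j ≠ i})))).toReal ^ 2)
      ≤ Real.sqrt ((T / d) ^ d / ((Nat.factorial d : ℕ) : ℝ)^2) := hsqrt
    _ = 1 / (((Nat.factorial d : ℕ) : ℝ) * (d:ℝ) ^ ((d:ℝ)/2)) * T ^ ((d:ℝ)/2) := heq
end

section
/- Let v_1, v_2, v_3, v_4 ∈ ℝ² be four unit vectors in strict counterclockwise cyclic order on the unit circle (so Q = conv{v_1, v_2, v_3, v_4} is a convex quadrilateral inscribed in the unit circle with the origin in its interior). Then Σ_{1≤i<j≤4} vol_2(conv{0, v_i, v_j})² ≤ 1, and equality holds when Q is a square. -/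
open MeasureTheory

section Aux
open Set


noncomputable section

abbrev E2 := EuclideanSpace ℝ (Fin 2)

lemma vol_O : volume {p : ℝ × ℝ | 0 < p.1 ∧ 0 < p.2 ∧ p.1 + p.2 < 1} = ENNReal.ofReal (1/2) := by
  have hset : {p : ℝ × ℝ | 0 < p.1 ∧ 0 < p.2 ∧ p.1 + p.2 < 1}
      = regionBetween (fun _ => (0:ℝ)) (fun x => 1 - x) (Ioo 0 1) := by
    ext p
    simp only [regionBetween, mem_setOf_eq, mem_Ioo]
    constructor
    · rintro ⟨h1, h2, h3⟩; exact ⟨⟨h1, by linarith⟩, h2, by linarith⟩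
    · rintro ⟨⟨h1, h2⟩, h3, h4⟩; exact ⟨h1, h3, by linarith⟩
  have hint0 : IntegrableOn (fun _ : ℝ => (0:ℝ)) (Ioo 0 1) volume := by
    simp [IntegrableOn]
  have hint1 : IntegrableOn (fun x : ℝ => 1 - x) (Ioo 0 1) volume := by
    rw [← integrableOn_Icc_iff_integrableOn_Ioo]
    exact (continuous_const.sub continuous_id).integrableOn_Icc
  rw [hset, Measure.volume_eq_prod, volume_regionBetween_eq_integral hint0 hint1
    measurableSet_Ioo (fun x hx => by simp only [mem_Ioo] at hx; linarith)]
  congr 1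
  simp only [Pi.sub_apply, sub_zero]
  rw [← MeasureTheory.integral_Ioc_eq_integral_Ioo,
    ← intervalIntegral.integral_of_le (zero_le_one)]
  rw [intervalIntegral.integral_sub (intervalIntegrable_const)
    (intervalIntegral.intervalIntegrable_id), intervalIntegral.integral_const, integral_id]
  norm_num

lemma vol_Sclosed : volume {p : ℝ × ℝ | 0 ≤ p.1 ∧ 0 ≤ p.2 ∧ p.1 + p.2 ≤ 1}
    = ENNReal.ofReal (1/2) := by
  set S : Set (ℝ × ℝ) := {p : ℝ × ℝ | 0 ≤ p.1 ∧ 0 ≤ p.2 ∧ p.1 + p.2 ≤ 1} with hS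
  set O : Set (ℝ × ℝ) := {p : ℝ × ℝ | 0 < p.1 ∧ 0 < p.2 ∧ p.1 + p.2 < 1} with hO
  have hOS : O ⊆ S := fun p hp => ⟨hp.1.le, hp.2.1.le, hp.2.2.le⟩
  have hconv : Convex ℝ S := by
    intro x hx y hy a b ha hb hab
    simp only [hS, mem_setOf_eq, Prod.fst_add, Prod.snd_add, Prod.smul_fst, Prod.smul_snd,
      smul_eq_mul] at *
    refine ⟨by nlinarith [hx.1, hy.1], by nlinarith [hx.2.1, hy.2.1], by nlinarith [hx.2.2, hy.2.2]⟩
  have hclosed : IsClosed S := by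
    have : S = {p : ℝ × ℝ | 0 ≤ p.1} ∩ ({p : ℝ × ℝ | 0 ≤ p.2} ∩ {p : ℝ × ℝ | p.1 + p.2 ≤ 1}) := by
      ext p; simp [hS, and_assoc]
    rw [this]
    exact (isClosed_le continuous_const continuous_fst).inter
      ((isClosed_le continuous_const continuous_snd).inter
        (isClosed_le (continuous_fst.add continuous_snd) continuous_const))
  have hsub : S ⊆ O ∪ frontier S := by
    intro p hp
    by_cases hpO : p ∈ O
    · exact Or.inl hpO
    right
    rw [frontier_eq_closure_inter_closure, hclosed.closure_eq]
    refine ⟨hp, ?_⟩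
    -- p ∈ closure Sᶜ
    rw [mem_closure_iff]
    intro o ho hpo
    rcases Metric.isOpen_iff.1 ho p hpo with ⟨ε, hε, hball⟩
    simp only [hO, mem_setOf_eq, not_and_or, not_lt] at hpO
    have h3 : ∀ w : ℝ × ℝ, ‖w‖ < ε → p + w ∈ o := by
      intro w hw
      apply hball
      simp [Metric.mem_ball, dist_eq_norm, hw]
    rcases hpO with h | h | h
    · refine ⟨p + (-(ε/2), 0), h3 _ (by simp [Prod.norm_def, abs_of_pos hε]; positivity), ?_⟩
      simp only [hS, mem_compl_iff, mem_setOf_eq, not_and_or, not_le, Prod.fst_add]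
      left; simp; nlinarith [hp.1]
    · refine ⟨p + (0, -(ε/2)), h3 _ (by simp [Prod.norm_def, abs_of_pos hε]; positivity), ?_⟩
      simp only [hS, mem_compl_iff, mem_setOf_eq, not_and_or, not_le, Prod.snd_add]
      right; left; simp; nlinarith [hp.2.1]
    · refine ⟨p + (ε/2, ε/2), h3 _ (by simp [Prod.norm_def, abs_of_pos hε]; positivity), ?_⟩
      simp only [hS, mem_compl_iff, mem_setOf_eq, not_and_or, not_le, Prod.fst_add, Prod.snd_add]
      right; right; nlinarith [hp.2.2]
  have hfront : volume (frontier S) = 0 := hconv.addHaar_frontier volume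
  have h1 : volume S ≤ ENNReal.ofReal (1/2) := by
    calc volume S ≤ volume O + volume (frontier S) :=
          le_trans (measure_mono hsub) (measure_union_le _ _)
      _ = ENNReal.ofReal (1/2) := by rw [hfront, vol_O, add_zero]
  have h2 : ENNReal.ofReal (1/2) ≤ volume S := vol_O ▸ measure_mono hOS
  exact le_antisymm h1 h2

lemma T0_eq : convexHull ℝ {(0 : EuclideanSpace ℝ (Fin 2)), EuclideanSpace.single 0 1,
      EuclideanSpace.single 1 1}
    = {x : EuclideanSpace ℝ (Fin 2) | 0 ≤ x 0 ∧ 0 ≤ x 1 ∧ x 0 + x 1 ≤ 1} := by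
  apply le_antisymm
  · apply convexHull_min
    · rintro x (rfl | rfl | rfl) <;> simp [EuclideanSpace.single_apply]
    · intro x hx y hy a b ha hb hab
      simp only [mem_setOf_eq] at *
      have e0 : (a • x + b • y) 0 = a * x 0 + b * y 0 := by
        simp [PiLp.add_apply, PiLp.smul_apply]
      have e1 : (a • x + b • y) 1 = a * x 1 + b * y 1 := by
        simp [PiLp.add_apply, PiLp.smul_apply]
      refine ⟨by rw [e0]; nlinarith [hx.1, hy.1], by rw [e1]; nlinarith [hx.2.1, hy.2.1],
        by rw [e0, e1]; nlinarith [hx.2.2, hy.2.2]⟩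
  · intro x hx
    simp only [mem_setOf_eq] at hx
    have hx' : x = (1 - x 0 - x 1) • (0 : EuclideanSpace ℝ (Fin 2))
        + (x 0 • EuclideanSpace.single 0 1 + x 1 • EuclideanSpace.single 1 1) := by
      ext i
      fin_cases i <;>
        simp [PiLp.add_apply, PiLp.smul_apply, EuclideanSpace.single_apply]
    have hsum := (convex_convexHull ℝ ({(0 : EuclideanSpace ℝ (Fin 2)),
        EuclideanSpace.single 0 1, EuclideanSpace.single 1 1} : Set (EuclideanSpace ℝ (Fin 2)))).sum_mem
      (t := (Finset.univ : Finset (Fin 3)))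
      (w := ![1 - x 0 - x 1, x 0, x 1])
      (z := ![0, EuclideanSpace.single 0 1, EuclideanSpace.single 1 1])
      (fun i _ => by fin_cases i <;> simp [hx.1, hx.2.1] <;> linarith [hx.2.2])
      (by simp [Fin.sum_univ_three]; ring)
      (fun i _ => by fin_cases i <;> exact subset_convexHull ℝ _ (by simp))
    rw [Fin.sum_univ_three] at hsum
    simp only [Matrix.cons_val_zero, Matrix.cons_val_one, Matrix.head_cons,
      Matrix.cons_val_two, Matrix.tail_cons] at hsum
    rw [hx', ← add_assoc]
    exact hsum

lemma vol_T0 : volume (convexHull ℝ {(0 : EuclideanSpace ℝ (Fin 2)),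
      EuclideanSpace.single 0 1, EuclideanSpace.single 1 1}) = ENNReal.ofReal (1/2) := by
  rw [T0_eq]
  have hmp1 := EuclideanSpace.volume_preserving_symm_measurableEquiv_toLp (Fin 2)
  have hmp2 := volume_preserving_finTwoArrow ℝ
  set S : Set (ℝ × ℝ) := {p : ℝ × ℝ | 0 ≤ p.1 ∧ 0 ≤ p.2 ∧ p.1 + p.2 ≤ 1} with hS
  have hSm : MeasurableSet S := by
    have : S = {p : ℝ × ℝ | 0 ≤ p.1} ∩ ({p : ℝ × ℝ | 0 ≤ p.2} ∩ {p : ℝ × ℝ | p.1 + p.2 ≤ 1}) := by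
      ext p; simp [hS, and_assoc]
    rw [this]
    exact (measurableSet_le measurable_const measurable_fst).inter
      ((measurableSet_le measurable_const measurable_snd).inter
        (measurableSet_le (measurable_fst.add measurable_snd) measurable_const))
  have key : {x : EuclideanSpace ℝ (Fin 2) | 0 ≤ x 0 ∧ 0 ≤ x 1 ∧ x 0 + x 1 ≤ 1}
      = ((MeasurableEquiv.toLp 2 (Fin 2 → ℝ)).symm) ⁻¹' ((MeasurableEquiv.finTwoArrow (α := ℝ)) ⁻¹' S) := by
    ext x
    simp [MeasurableEquiv.finTwoArrow, hS]
  rw [key, hmp1.measure_preimage (((MeasurableEquiv.finTwoArrow (α := ℝ)).measurable hSm).nullMeasurableSet),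
    hmp2.measure_preimage hSm.nullMeasurableSet]
  exact vol_Sclosed

lemma vol_tri (a b : EuclideanSpace ℝ (Fin 2)) :
    volume (convexHull ℝ {(0 : EuclideanSpace ℝ (Fin 2)), a, b})
      = ENNReal.ofReal (|a 0 * b 1 - a 1 * b 0| / 2) := by
  set L : EuclideanSpace ℝ (Fin 2) →ₗ[ℝ] EuclideanSpace ℝ (Fin 2) :=
    { toFun := fun x => x 0 • a + x 1 • b
      map_add' := by
        intro x y
        have h0 : (x + y) 0 = x 0 + y 0 := rfl
        have h1 : (x + y) 1 = x 1 + y 1 := rfl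
        show (x+y) 0 • a + (x+y) 1 • b = (x 0 • a + x 1 • b) + (y 0 • a + y 1 • b)
        rw [h0, h1, add_smul, add_smul]
        abel
      map_smul' := by
        intro c x
        have h0 : (c • x) 0 = c * x 0 := rfl
        have h1 : (c • x) 1 = c * x 1 := rfl
        show (c • x) 0 • a + (c • x) 1 • b = c • (x 0 • a + x 1 • b)
        rw [h0, h1, smul_add, mul_smul, mul_smul] } with hLdef
  have hL : ∀ x : EuclideanSpace ℝ (Fin 2), L x = x 0 • a + x 1 • b := fun _ => rfl
  have hL0 : L (EuclideanSpace.single 0 1) = a := by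
    rw [hL]; simp [EuclideanSpace.single_apply]
  have hL1 : L (EuclideanSpace.single 1 1) = b := by
    rw [hL]; simp [EuclideanSpace.single_apply]
  have him : convexHull ℝ {(0 : EuclideanSpace ℝ (Fin 2)), a, b}
      = L '' (convexHull ℝ {(0 : EuclideanSpace ℝ (Fin 2)),
        EuclideanSpace.single 0 1, EuclideanSpace.single 1 1}) := by
    rw [L.image_convexHull, Set.image_insert_eq, Set.image_insert_eq, Set.image_singleton,
      map_zero, hL0, hL1]
  have hdet : LinearMap.det L = a 0 * b 1 - a 1 * b 0 := by
    rw [← LinearMap.det_toMatrix (EuclideanSpace.basisFun (Fin 2) ℝ).toBasis,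
      Matrix.det_fin_two]
    simp only [LinearMap.toMatrix_apply, OrthonormalBasis.coe_toBasis,
      OrthonormalBasis.coe_toBasis_repr_apply, EuclideanSpace.basisFun_repr,
      EuclideanSpace.basisFun_apply, hL0, hL1]
    ring
  rw [him, Measure.addHaar_image_linearMap, vol_T0, hdet,
    ← ENNReal.ofReal_mul (abs_nonneg _), mul_one_div]

lemma key_ineq (c0 s0 c1 s1 c2 s2 c3 s3 : ℝ) (h0 : c0^2+s0^2=1) (h1 : c1^2+s1^2=1)
    (h2 : c2^2+s2^2=1) (h3 : c3^2+s3^2=1) :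
    (c0*s1-s0*c1)^2 + (c0*s2-s0*c2)^2 + (c0*s3-s0*c3)^2 + (c1*s2-s1*c2)^2
      + (c1*s3-s1*c3)^2 + (c2*s3-s2*c3)^2 ≤ 4 := by
  have hid : (c0*s1-s0*c1)^2 + (c0*s2-s0*c2)^2 + (c0*s3-s0*c3)^2 + (c1*s2-s1*c2)^2
      + (c1*s3-s1*c3)^2 + (c2*s3-s2*c3)^2
      = 4 - (c0^2+c1^2+c2^2+c3^2-s0^2-s1^2-s2^2-s3^2)^2/4
          - (c0*s0+c1*s1+c2*s2+c3*s3)^2 := by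
    linear_combination
      (1/4 + (s3^2+s2^2+s1^2+c3^2+c2^2+c1^2)/2 + (s0^2+c0^2)/4) * h0
      + (3/4 + (s3^2+s2^2+c3^2+c2^2)/2 + (s1^2+c1^2)/4) * h1
      + (5/4 + (s3^2+c3^2)/2 + (s2^2+c2^2)/4) * h2
      + (7/4 + (s3^2+c3^2)/4) * h3
  nlinarith [sq_nonneg (c0^2+c1^2+c2^2+c3^2-s0^2-s1^2-s2^2-s3^2),
    sq_nonneg (c0*s0+c1*s1+c2*s2+c3*s3)]

end
end Aux

/-- Let `v 0, v 1, v 2, v 3` be unit vectors in strict counterclockwise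
cyclic order on the unit circle in `ℝ²` (so `Q = conv {v j}` is a convex quadrilateral
inscribed in the unit circle with the origin in its interior).  Then
`∑_{i<j} vol_2(conv {0, v i, v j})² ≤ 1`, with equality when `Q` is a square. -/
theorem stmt_10 (θ : Fin 4 → ℝ) (v : Fin 4 → EuclideanSpace ℝ (Fin 2))
    (hv : ∀ j, v j 0 = Real.cos (θ j) ∧ v j 1 = Real.sin (θ j))
    (h01 : θ 0 < θ 1) (h12 : θ 1 < θ 2) (h23 : θ 2 < θ 3) (h30 : θ 3 < θ 0 + 2 * Real.pi) :
    (∑ i : Fin 4, ∑ j : Fin 4, if i < j then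
        (volume (convexHull ℝ {(0 : EuclideanSpace ℝ (Fin 2)), v i, v j})).toReal ^ 2 else 0)
      ≤ 1 ∧
    ((θ 1 = θ 0 + Real.pi / 2 ∧ θ 2 = θ 0 + Real.pi ∧ θ 3 = θ 0 + 3 * Real.pi / 2) →
      (∑ i : Fin 4, ∑ j : Fin 4, if i < j then
        (volume (convexHull ℝ {(0 : EuclideanSpace ℝ (Fin 2)), v i, v j})).toReal ^ 2 else 0)
      = 1) := by
  have hterm : ∀ i j : Fin 4,
      (volume (convexHull ℝ {(0 : EuclideanSpace ℝ (Fin 2)), v i, v j})).toReal ^ 2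
        = (Real.cos (θ i) * Real.sin (θ j) - Real.sin (θ i) * Real.cos (θ j)) ^ 2 / 4 := by
    intro i j
    rw [vol_tri, (hv i).1, (hv i).2, (hv j).1, (hv j).2,
      ENNReal.toReal_ofReal (by positivity), div_pow, sq_abs]
    norm_num
  have hsum : (∑ i : Fin 4, ∑ j : Fin 4, if i < j then
        (volume (convexHull ℝ {(0 : EuclideanSpace ℝ (Fin 2)), v i, v j})).toReal ^ 2 else 0)
      = ((Real.cos (θ 0) * Real.sin (θ 1) - Real.sin (θ 0) * Real.cos (θ 1)) ^ 2
        + (Real.cos (θ 0) * Real.sin (θ 2) - Real.sin (θ 0) * Real.cos (θ 2)) ^ 2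
        + (Real.cos (θ 0) * Real.sin (θ 3) - Real.sin (θ 0) * Real.cos (θ 3)) ^ 2
        + (Real.cos (θ 1) * Real.sin (θ 2) - Real.sin (θ 1) * Real.cos (θ 2)) ^ 2
        + (Real.cos (θ 1) * Real.sin (θ 3) - Real.sin (θ 1) * Real.cos (θ 3)) ^ 2
        + (Real.cos (θ 2) * Real.sin (θ 3) - Real.sin (θ 2) * Real.cos (θ 3)) ^ 2) / 4 := by
    simp only [hterm, Fin.sum_univ_four,
      show ((0:Fin 4)<0) = False from by decide,
      show ((0:Fin 4)<1) = True from by decide,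
      show ((0:Fin 4)<2) = True from by decide,
      show ((0:Fin 4)<3) = True from by decide,
      show ((1:Fin 4)<0) = False from by decide,
      show ((1:Fin 4)<1) = False from by decide,
      show ((1:Fin 4)<2) = True from by decide,
      show ((1:Fin 4)<3) = True from by decide,
      show ((2:Fin 4)<0) = False from by decide,
      show ((2:Fin 4)<1) = False from by decide,
      show ((2:Fin 4)<2) = False from by decide,
      show ((2:Fin 4)<3) = True from by decide,
      show ((3:Fin 4)<0) = False from by decide,
      show ((3:Fin 4)<1) = False from by decide,
      show ((3:Fin 4)<2) = False from by decide,
      show ((3:Fin 4)<3) = False from by decide,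
      if_true, if_false]
    ring
  constructor
  · rw [hsum]
    have := key_ineq (Real.cos (θ 0)) (Real.sin (θ 0)) (Real.cos (θ 1)) (Real.sin (θ 1))
      (Real.cos (θ 2)) (Real.sin (θ 2)) (Real.cos (θ 3)) (Real.sin (θ 3))
      (Real.cos_sq_add_sin_sq _) (Real.cos_sq_add_sin_sq _)
      (Real.cos_sq_add_sin_sq _) (Real.cos_sq_add_sin_sq _)
    linarith
  · rintro ⟨e1, e2, e3⟩
    rw [hsum]
    have hs1 : Real.sin (θ 1) = Real.cos (θ 0) := by rw [e1, Real.sin_add_pi_div_two]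
    have hc1 : Real.cos (θ 1) = -Real.sin (θ 0) := by rw [e1, Real.cos_add_pi_div_two]
    have hs2 : Real.sin (θ 2) = -Real.sin (θ 0) := by rw [e2, Real.sin_add_pi]
    have hc2 : Real.cos (θ 2) = -Real.cos (θ 0) := by rw [e2, Real.cos_add_pi]
    have h3' : θ 3 = (θ 0 + Real.pi) + Real.pi / 2 := by rw [e3]; ring
    have hs3 : Real.sin (θ 3) = -Real.cos (θ 0) := by
      rw [h3', Real.sin_add_pi_div_two, Real.cos_add_pi]
    have hc3 : Real.cos (θ 3) = Real.sin (θ 0) := by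
      rw [h3', Real.cos_add_pi_div_two, Real.sin_add_pi, neg_neg]
    rw [hs1, hc1, hs2, hc2, hs3, hc3]
    have hpy := Real.sin_sq_add_cos_sq (θ 0)
    linear_combination (Real.sin (θ 0) ^ 2 + Real.cos (θ 0) ^ 2 + 1) * hpy
end

section
/- Let v_1, v_2, v_3, v_4, v_5 ∈ ℝ³ be unit vectors. Then Σ_{1≤i<j<k≤5} vol_3(conv{0, v_i, v_j, v_k})² ≤ (1/(3!)²) · (5/3)³ = 125/972. In particular, for any convex polytope Q with 5 vertices inscribed in the unit sphere of ℝ³ (e.g. a pyramid or a triangular bipyramid), the ℓ₂ norm of the volumes, taken over all tetrahedra spanned by the origin and three vertices, is at most (1/3!) · (5/3)^{3/2}. -/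
open MeasureTheory

noncomputable section Stmt13Aux


lemma vol2 (c : ℝ) :
    volume {q : ℝ × ℝ | 0 ≤ q.1 ∧ 0 ≤ q.2 ∧ q.1 + q.2 ≤ c} ≤ ENNReal.ofReal (c^2/2) := by
  rcases lt_or_ge c 0 with hc | hc
  · have h : {q : ℝ × ℝ | 0 ≤ q.1 ∧ 0 ≤ q.2 ∧ q.1 + q.2 ≤ c} = ∅ := by
      ext q; simp only [Set.mem_setOf_eq, Set.mem_empty_iff_false, iff_false]
      rintro ⟨h1, h2, h3⟩; linarith
    simp [h]
  · have hmeas : MeasurableSet {q : ℝ × ℝ | 0 ≤ q.1 ∧ 0 ≤ q.2 ∧ q.1 + q.2 ≤ c} := by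
      exact (measurableSet_le measurable_const measurable_fst).inter
        ((measurableSet_le measurable_const measurable_snd).inter
          (measurableSet_le (measurable_fst.add measurable_snd) measurable_const))
    rw [Measure.volume_eq_prod, Measure.prod_apply hmeas]
    have hslice : ∀ x : ℝ, (Prod.mk x ⁻¹' {q : ℝ × ℝ | 0 ≤ q.1 ∧ 0 ≤ q.2 ∧ q.1 + q.2 ≤ c})
        = if 0 ≤ x then Set.Icc 0 (c - x) else ∅ := by
      intro x
      split_ifs with hx
      · ext y; simp [Set.mem_Icc, hx]; intro _; constructor <;> intro h <;> linarith
      · ext y; simp [hx]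
    have key : (∫⁻ x, volume (Prod.mk x ⁻¹' {q : ℝ × ℝ | 0 ≤ q.1 ∧ 0 ≤ q.2 ∧ q.1 + q.2 ≤ c}))
        = ∫⁻ x, Set.indicator (Set.Ici 0) (fun x => ENNReal.ofReal (c - x)) x := by
      congr 1; funext x
      rw [hslice x]
      by_cases hx : 0 ≤ x
      · rw [if_pos hx, Set.indicator_of_mem (Set.mem_Ici.2 hx), Real.volume_Icc, sub_zero]
      · rw [if_neg hx, Set.indicator_of_notMem (by simpa using hx), measure_empty]
    rw [key, lintegral_indicator measurableSet_Ici _]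
    have hsplit : Set.Ici (0:ℝ) = Set.Icc 0 c ∪ Set.Ioi c := by
      ext x; simp [Set.mem_Icc, Set.mem_Ioi]; constructor
      · intro h; rcases le_or_gt x c with h' | h'; exacts [Or.inl ⟨h, h'⟩, Or.inr h']
      · rintro (⟨h, _⟩ | h); exacts [h, by linarith]
    rw [hsplit, lintegral_union measurableSet_Ioi (by
      rw [Set.disjoint_iff]; rintro x ⟨⟨_, h1⟩, h2⟩; exact absurd h1 (not_le.2 h2))]
    have h2 : (∫⁻ x in Set.Ioi c, ENNReal.ofReal (c - x)) = 0 := by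
      rw [setLIntegral_congr_fun measurableSet_Ioi
        (fun x (hx : x ∈ Set.Ioi c) => by
          rw [ENNReal.ofReal_eq_zero.2 (by simp at hx; linarith)])]
      simp
    have h1 : (∫⁻ x in Set.Icc 0 c, ENNReal.ofReal (c - x)) = ENNReal.ofReal (c^2/2) := by
      have hint : IntegrableOn (fun x : ℝ => c - x) (Set.Icc 0 c) := by
        apply Continuous.integrableOn_Icc; fun_prop
      have hnn : 0 ≤ᵐ[volume.restrict (Set.Icc 0 c)] (fun x : ℝ => c - x) :=
        (ae_restrict_iff' measurableSet_Icc).2 (ae_of_all _ fun x hx => by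
          simp only [Set.mem_Icc] at hx; simp only [Pi.zero_apply]; linarith [hx.2])
      rw [← ofReal_integral_eq_lintegral_ofReal hint hnn]
      congr 1
      rw [integral_Icc_eq_integral_Ioc, ← intervalIntegral.integral_of_le hc,
        intervalIntegral.integral_sub intervalIntegrable_const intervalIntegral.intervalIntegrable_id,
        intervalIntegral.integral_const, integral_id]
      simp; ring
    rw [h1, h2, add_zero]

lemma vol3 :
    volume {p : ℝ × ℝ × ℝ | 0 ≤ p.1 ∧ 0 ≤ p.2.1 ∧ 0 ≤ p.2.2 ∧ p.1 + p.2.1 + p.2.2 ≤ 1}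
      ≤ ENNReal.ofReal (1/6) := by
  have hm1 : Measurable fun p : ℝ × ℝ × ℝ => p.2.1 := measurable_fst.comp measurable_snd
  have hm2 : Measurable fun p : ℝ × ℝ × ℝ => p.2.2 := measurable_snd.comp measurable_snd
  have hmeas : MeasurableSet {p : ℝ × ℝ × ℝ | 0 ≤ p.1 ∧ 0 ≤ p.2.1 ∧ 0 ≤ p.2.2 ∧
      p.1 + p.2.1 + p.2.2 ≤ 1} :=
    (measurableSet_le measurable_const measurable_fst).inter
      ((measurableSet_le measurable_const hm1).inter
        ((measurableSet_le measurable_const hm2).inter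
          (measurableSet_le ((measurable_fst.add hm1).add hm2) measurable_const)))
  rw [Measure.volume_eq_prod, Measure.prod_apply hmeas]
  have hslice : ∀ x : ℝ,
      volume (Prod.mk x ⁻¹' {p : ℝ × ℝ × ℝ | 0 ≤ p.1 ∧ 0 ≤ p.2.1 ∧ 0 ≤ p.2.2 ∧
        p.1 + p.2.1 + p.2.2 ≤ 1})
      ≤ Set.indicator (Set.Icc 0 1) (fun x => ENNReal.ofReal ((1-x)^2/2)) x := by
    intro x
    by_cases hx : x ∈ Set.Icc (0:ℝ) 1
    · rw [Set.indicator_of_mem hx]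
      refine le_trans (measure_mono ?_) (vol2 (1 - x))
      rintro q ⟨h1, h2, h3, h4⟩
      simp only [Set.mem_preimage, Set.mem_setOf_eq] at h1 h2 h3 h4 ⊢; exact ⟨h2, h3, by linarith⟩
    · rw [Set.indicator_of_notMem hx]
      simp only [Set.mem_Icc, not_and_or, not_le] at hx
      have : (Prod.mk x ⁻¹' {p : ℝ × ℝ × ℝ | 0 ≤ p.1 ∧ 0 ≤ p.2.1 ∧ 0 ≤ p.2.2 ∧
          p.1 + p.2.1 + p.2.2 ≤ 1}) = ∅ := by
        ext q; simp only [Set.mem_preimage, Set.mem_setOf_eq, Set.mem_empty_iff_false, iff_false]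
        rintro ⟨h1, h2, h3, h4⟩
        rcases hx with hx | hx <;> linarith
      simp [this]
  refine le_trans (lintegral_mono hslice) ?_
  rw [lintegral_indicator measurableSet_Icc _]
  have hint : IntegrableOn (fun x : ℝ => (1-x)^2/2) (Set.Icc 0 1) := by
    apply Continuous.integrableOn_Icc; fun_prop
  have hnn : 0 ≤ᵐ[volume.restrict (Set.Icc 0 1)] (fun x : ℝ => (1-x)^2/2) :=
    ae_of_all _ fun x => by positivity
  rw [← ofReal_integral_eq_lintegral_ofReal hint hnn]
  apply ENNReal.ofReal_le_ofReal
  have heq : ∫ x in Set.Icc (0:ℝ) 1, (1-x)^2/2 = ∫ x in (0:ℝ)..1, (x^2/2 - x + 1/2) := by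
    rw [integral_Icc_eq_integral_Ioc, ← intervalIntegral.integral_of_le zero_le_one]
    apply intervalIntegral.integral_congr
    intro x _; ring
  rw [heq]
  rw [intervalIntegral.integral_add (by apply Continuous.intervalIntegrable; fun_prop)
      (by apply Continuous.intervalIntegrable; fun_prop),
    intervalIntegral.integral_sub (by apply Continuous.intervalIntegrable; fun_prop)
      (by apply Continuous.intervalIntegrable; fun_prop)]
  have h1 : ∫ x in (0:ℝ)..1, x^2/2 = 1/6 := by
    rw [intervalIntegral.integral_div, integral_pow]; norm_num
  rw [h1, integral_id, intervalIntegral.integral_const]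
  norm_num

lemma hmeas3 : MeasurableSet {p : ℝ × ℝ × ℝ | 0 ≤ p.1 ∧ 0 ≤ p.2.1 ∧ 0 ≤ p.2.2 ∧
      p.1 + p.2.1 + p.2.2 ≤ 1} :=
  (measurableSet_le measurable_const measurable_fst).inter
    ((measurableSet_le measurable_const (measurable_fst.comp measurable_snd)).inter
      ((measurableSet_le measurable_const (measurable_snd.comp measurable_snd)).inter
        (measurableSet_le ((measurable_fst.add (measurable_fst.comp measurable_snd)).add
          (measurable_snd.comp measurable_snd)) measurable_const)))



lemma volT :
    volume {x : EuclideanSpace ℝ (Fin 3) | (∀ i, 0 ≤ x i) ∧ x 0 + x 1 + x 2 ≤ 1}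
      ≤ ENNReal.ofReal (1/6) := by
  set S3 : Set (ℝ × ℝ × ℝ) := {p : ℝ × ℝ × ℝ | 0 ≤ p.1 ∧ 0 ≤ p.2.1 ∧ 0 ≤ p.2.2 ∧
      p.1 + p.2.1 + p.2.2 ≤ 1} with hS3
  let e0 := (MeasurableEquiv.toLp 2 (Fin 3 → ℝ)).symm
  let e1 := MeasurableEquiv.piFinSuccAbove (fun _ : Fin 3 => ℝ) 0
  let e2 := (MeasurableEquiv.refl ℝ).prodCongr (MeasurableEquiv.finTwoArrow (α := ℝ))
  have h2 : MeasurePreserving e2 volume volume := by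
    have := (MeasurePreserving.id (volume : Measure ℝ)).prod
      (volume_preserving_finTwoArrow ℝ)
    exact this
  have hG : MeasurePreserving (e0.trans (e1.trans e2)) volume volume :=
    (h2.comp (volume_preserving_piFinSuccAbove (fun _ : Fin 3 => ℝ) 0)).comp
      (EuclideanSpace.volume_preserving_symm_measurableEquiv_toLp (Fin 3))
  have hset : {x : EuclideanSpace ℝ (Fin 3) | (∀ i, 0 ≤ x i) ∧ x 0 + x 1 + x 2 ≤ 1}
      = (e0.trans (e1.trans e2)) ⁻¹' S3 := by
    ext x
    have hx : (e0.trans (e1.trans e2)) x = (x 0, (x 1, x 2)) := by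
      simp [e0, e1, e2, MeasurableEquiv.piFinSuccAbove, MeasurableEquiv.finTwoArrow,
        MeasurableEquiv.trans, MeasurableEquiv.prodCongr, Fin.removeNth, Fin.succAbove,
        MeasurableEquiv.toLp, Fin.tail]; exact ⟨rfl, rfl, rfl⟩
    simp only [Set.mem_setOf_eq, Set.mem_preimage, hx, hS3]
    constructor
    · rintro ⟨h1, h2⟩; exact ⟨h1 0, h1 1, h1 2, h2⟩
    · rintro ⟨h1, h2, h3, h4⟩
      refine ⟨fun i => ?_, h4⟩
      fin_cases i <;> assumption
  rw [hset, hG.measure_preimage hmeas3.nullMeasurableSet]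
  exact vol3

def det3 (a b c : EuclideanSpace ℝ (Fin 3)) : ℝ :=
  a 0 * b 1 * c 2 - a 0 * b 2 * c 1 - a 1 * b 0 * c 2
    + a 1 * b 2 * c 0 + a 2 * b 0 * c 1 - a 2 * b 1 * c 0


lemma tetra_vol (a b c : EuclideanSpace ℝ (Fin 3)) :
    (volume (convexHull ℝ {(0 : EuclideanSpace ℝ (Fin 3)), a, b, c})).toReal
      ≤ |det3 a b c| / 6 := by
  classical
  set T : Set (EuclideanSpace ℝ (Fin 3)) :=
    {x | (∀ i, 0 ≤ x i) ∧ x 0 + x 1 + x 2 ≤ 1} with hT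
  have hconvT : Convex ℝ T := by
    rintro x ⟨hx1, hx2⟩ y ⟨hy1, hy2⟩ α β hα hβ hαβ
    constructor
    · intro i
      have h : (α • x + β • y) i = α * x i + β * y i := rfl
      rw [h]
      have := hx1 i; have := hy1 i
      positivity
    · have h0 : (α • x + β • y) 0 = α * x 0 + β * y 0 := rfl
      have h1 : (α • x + β • y) 1 = α * x 1 + β * y 1 := rfl
      have h2 : (α • x + β • y) 2 = α * x 2 + β * y 2 := rfl
      rw [h0, h1, h2]
      nlinarith [hx1 0, hx1 1, hx1 2, hy1 0, hy1 1, hy1 2]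
  let B := (EuclideanSpace.basisFun (Fin 3) ℝ).toBasis
  let M : Matrix (Fin 3) (Fin 3) ℝ := Matrix.of fun i j => ![a, b, c] j i
  let f : EuclideanSpace ℝ (Fin 3) →ₗ[ℝ] EuclideanSpace ℝ (Fin 3) := Matrix.toLin B B M
  have hdet : LinearMap.det f = det3 a b c := by
    show LinearMap.det (Matrix.toLin B B M) = det3 a b c
    rw [LinearMap.det_toLin]
    show Matrix.det (Matrix.of fun i j => ![a, b, c] j i) = det3 a b c
    rw [Matrix.det_fin_three]
    simp only [Matrix.of_apply, Matrix.cons_val_zero, Matrix.cons_val_one, Matrix.head_cons,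
      Matrix.cons_val_two, Matrix.tail_cons]
    unfold det3
    ring
  have hBapply : ∀ i : Fin 3, B i = EuclideanSpace.single i 1 := by
    intro i
    show (EuclideanSpace.basisFun (Fin 3) ℝ).toBasis i = _
    rw [OrthonormalBasis.coe_toBasis, EuclideanSpace.basisFun_apply]
  have hsum : ∀ w : EuclideanSpace ℝ (Fin 3), ∑ i : Fin 3, w i • B i = w := by
    intro w
    apply PiLp.ext
    intro j
    have happ : ∀ (u v : EuclideanSpace ℝ (Fin 3)), (u + v) j = u j + v j := fun _ _ => rfl
    simp only [Fin.sum_univ_three, hBapply, happ]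
    have hs : ∀ (r : ℝ) (u : EuclideanSpace ℝ (Fin 3)), (r • u) j = r * u j := fun _ _ => rfl
    rw [hs, hs, hs]
    fin_cases j <;> simp [EuclideanSpace.single_apply]
  have hmemT : ∀ j : Fin 3, B j ∈ T := by
    intro j
    rw [hT]
    constructor
    · intro i; rw [hBapply]
      rw [EuclideanSpace.single_apply]
      split <;> norm_num
    · rw [hBapply]
      fin_cases j <;> simp [EuclideanSpace.single_apply]
  have hfB : ∀ j : Fin 3, f (B j) = ![a, b, c] j := by
    intro j
    show Matrix.toLin B B M (B j) = _
    rw [Matrix.toLin_self]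
    have : ∀ i : Fin 3, M i j = (![a, b, c] j) i := fun i => rfl
    calc ∑ i : Fin 3, M i j • B i = ∑ i : Fin 3, (![a, b, c] j) i • B i := by
          exact Finset.sum_congr rfl fun i _ => by rw [this i]
      _ = ![a, b, c] j := hsum _
  have hsub : convexHull ℝ {(0 : EuclideanSpace ℝ (Fin 3)), a, b, c} ⊆ f '' T := by
    apply convexHull_min
    · intro z hz
      simp only [Set.mem_insert_iff, Set.mem_singleton_iff] at hz
      rcases hz with rfl | rfl | rfl | rfl
      · exact ⟨0, ⟨fun i => le_refl 0, by norm_num⟩, map_zero f⟩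
      · exact ⟨B 0, hmemT 0, by rw [hfB 0]; rfl⟩
      · exact ⟨B 1, hmemT 1, by rw [hfB 1]; rfl⟩
      · exact ⟨B 2, hmemT 2, by rw [hfB 2]; rfl⟩
    · exact hconvT.linear_image f
  have himg : volume (f '' T) = ENNReal.ofReal |LinearMap.det f| * volume T :=
    Measure.addHaar_image_linearMap volume f T
  have hle : volume (convexHull ℝ {(0 : EuclideanSpace ℝ (Fin 3)), a, b, c})
      ≤ ENNReal.ofReal (|det3 a b c| / 6) := by
    refine le_trans (measure_mono hsub) ?_
    rw [himg, hdet]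
    calc ENNReal.ofReal |det3 a b c| * volume T
        ≤ ENNReal.ofReal |det3 a b c| * ENNReal.ofReal (1/6) :=
          mul_le_mul_right volT _
      _ = ENNReal.ofReal (|det3 a b c| / 6) := by
          rw [← ENNReal.ofReal_mul (abs_nonneg _), mul_one_div]
  exact ENNReal.toReal_le_of_le_ofReal (by positivity) hle

set_option maxHeartbeats 1000000 in
lemma sum_triples (g : Fin 5 → Fin 5 → Fin 5 → ℝ) :
    (∑ i : Fin 5, ∑ j : Fin 5, ∑ k : Fin 5, if i < j ∧ j < k then g i j k else 0)
      = g 0 1 2 + g 0 1 3 + g 0 1 4 + g 0 2 3 + g 0 2 4 + g 0 3 4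
        + g 1 2 3 + g 1 2 4 + g 1 3 4 + g 2 3 4 := by
  simp only [Fin.sum_univ_five]
  rw [if_neg (show ¬((0:Fin 5) < 0 ∧ (0:Fin 5) < 0) by decide),
    if_neg (show ¬((0:Fin 5) < 0 ∧ (0:Fin 5) < 1) by decide),
    if_neg (show ¬((0:Fin 5) < 0 ∧ (0:Fin 5) < 2) by decide),
    if_neg (show ¬((0:Fin 5) < 0 ∧ (0:Fin 5) < 3) by decide),
    if_neg (show ¬((0:Fin 5) < 0 ∧ (0:Fin 5) < 4) by decide),
    if_neg (show ¬((0:Fin 5) < 1 ∧ (1:Fin 5) < 0) by decide),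
    if_neg (show ¬((0:Fin 5) < 1 ∧ (1:Fin 5) < 1) by decide),
    if_pos (show ((0:Fin 5) < 1 ∧ (1:Fin 5) < 2) by decide),
    if_pos (show ((0:Fin 5) < 1 ∧ (1:Fin 5) < 3) by decide),
    if_pos (show ((0:Fin 5) < 1 ∧ (1:Fin 5) < 4) by decide),
    if_neg (show ¬((0:Fin 5) < 2 ∧ (2:Fin 5) < 0) by decide),
    if_neg (show ¬((0:Fin 5) < 2 ∧ (2:Fin 5) < 1) by decide),
    if_neg (show ¬((0:Fin 5) < 2 ∧ (2:Fin 5) < 2) by decide),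
    if_pos (show ((0:Fin 5) < 2 ∧ (2:Fin 5) < 3) by decide),
    if_pos (show ((0:Fin 5) < 2 ∧ (2:Fin 5) < 4) by decide),
    if_neg (show ¬((0:Fin 5) < 3 ∧ (3:Fin 5) < 0) by decide),
    if_neg (show ¬((0:Fin 5) < 3 ∧ (3:Fin 5) < 1) by decide),
    if_neg (show ¬((0:Fin 5) < 3 ∧ (3:Fin 5) < 2) by decide),
    if_neg (show ¬((0:Fin 5) < 3 ∧ (3:Fin 5) < 3) by decide),
    if_pos (show ((0:Fin 5) < 3 ∧ (3:Fin 5) < 4) by decide),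
    if_neg (show ¬((0:Fin 5) < 4 ∧ (4:Fin 5) < 0) by decide),
    if_neg (show ¬((0:Fin 5) < 4 ∧ (4:Fin 5) < 1) by decide),
    if_neg (show ¬((0:Fin 5) < 4 ∧ (4:Fin 5) < 2) by decide),
    if_neg (show ¬((0:Fin 5) < 4 ∧ (4:Fin 5) < 3) by decide),
    if_neg (show ¬((0:Fin 5) < 4 ∧ (4:Fin 5) < 4) by decide),
    if_neg (show ¬((1:Fin 5) < 0 ∧ (0:Fin 5) < 0) by decide),
    if_neg (show ¬((1:Fin 5) < 0 ∧ (0:Fin 5) < 1) by decide),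
    if_neg (show ¬((1:Fin 5) < 0 ∧ (0:Fin 5) < 2) by decide),
    if_neg (show ¬((1:Fin 5) < 0 ∧ (0:Fin 5) < 3) by decide),
    if_neg (show ¬((1:Fin 5) < 0 ∧ (0:Fin 5) < 4) by decide),
    if_neg (show ¬((1:Fin 5) < 1 ∧ (1:Fin 5) < 0) by decide),
    if_neg (show ¬((1:Fin 5) < 1 ∧ (1:Fin 5) < 1) by decide),
    if_neg (show ¬((1:Fin 5) < 1 ∧ (1:Fin 5) < 2) by decide),
    if_neg (show ¬((1:Fin 5) < 1 ∧ (1:Fin 5) < 3) by decide),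
    if_neg (show ¬((1:Fin 5) < 1 ∧ (1:Fin 5) < 4) by decide),
    if_neg (show ¬((1:Fin 5) < 2 ∧ (2:Fin 5) < 0) by decide),
    if_neg (show ¬((1:Fin 5) < 2 ∧ (2:Fin 5) < 1) by decide),
    if_neg (show ¬((1:Fin 5) < 2 ∧ (2:Fin 5) < 2) by decide),
    if_pos (show ((1:Fin 5) < 2 ∧ (2:Fin 5) < 3) by decide),
    if_pos (show ((1:Fin 5) < 2 ∧ (2:Fin 5) < 4) by decide),
    if_neg (show ¬((1:Fin 5) < 3 ∧ (3:Fin 5) < 0) by decide),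
    if_neg (show ¬((1:Fin 5) < 3 ∧ (3:Fin 5) < 1) by decide),
    if_neg (show ¬((1:Fin 5) < 3 ∧ (3:Fin 5) < 2) by decide),
    if_neg (show ¬((1:Fin 5) < 3 ∧ (3:Fin 5) < 3) by decide),
    if_pos (show ((1:Fin 5) < 3 ∧ (3:Fin 5) < 4) by decide),
    if_neg (show ¬((1:Fin 5) < 4 ∧ (4:Fin 5) < 0) by decide),
    if_neg (show ¬((1:Fin 5) < 4 ∧ (4:Fin 5) < 1) by decide),
    if_neg (show ¬((1:Fin 5) < 4 ∧ (4:Fin 5) < 2) by decide),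
    if_neg (show ¬((1:Fin 5) < 4 ∧ (4:Fin 5) < 3) by decide),
    if_neg (show ¬((1:Fin 5) < 4 ∧ (4:Fin 5) < 4) by decide),
    if_neg (show ¬((2:Fin 5) < 0 ∧ (0:Fin 5) < 0) by decide),
    if_neg (show ¬((2:Fin 5) < 0 ∧ (0:Fin 5) < 1) by decide),
    if_neg (show ¬((2:Fin 5) < 0 ∧ (0:Fin 5) < 2) by decide),
    if_neg (show ¬((2:Fin 5) < 0 ∧ (0:Fin 5) < 3) by decide),
    if_neg (show ¬((2:Fin 5) < 0 ∧ (0:Fin 5) < 4) by decide),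
    if_neg (show ¬((2:Fin 5) < 1 ∧ (1:Fin 5) < 0) by decide),
    if_neg (show ¬((2:Fin 5) < 1 ∧ (1:Fin 5) < 1) by decide),
    if_neg (show ¬((2:Fin 5) < 1 ∧ (1:Fin 5) < 2) by decide),
    if_neg (show ¬((2:Fin 5) < 1 ∧ (1:Fin 5) < 3) by decide),
    if_neg (show ¬((2:Fin 5) < 1 ∧ (1:Fin 5) < 4) by decide),
    if_neg (show ¬((2:Fin 5) < 2 ∧ (2:Fin 5) < 0) by decide),
    if_neg (show ¬((2:Fin 5) < 2 ∧ (2:Fin 5) < 1) by decide),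
    if_neg (show ¬((2:Fin 5) < 2 ∧ (2:Fin 5) < 2) by decide),
    if_neg (show ¬((2:Fin 5) < 2 ∧ (2:Fin 5) < 3) by decide),
    if_neg (show ¬((2:Fin 5) < 2 ∧ (2:Fin 5) < 4) by decide),
    if_neg (show ¬((2:Fin 5) < 3 ∧ (3:Fin 5) < 0) by decide),
    if_neg (show ¬((2:Fin 5) < 3 ∧ (3:Fin 5) < 1) by decide),
    if_neg (show ¬((2:Fin 5) < 3 ∧ (3:Fin 5) < 2) by decide),
    if_neg (show ¬((2:Fin 5) < 3 ∧ (3:Fin 5) < 3) by decide),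
    if_pos (show ((2:Fin 5) < 3 ∧ (3:Fin 5) < 4) by decide),
    if_neg (show ¬((2:Fin 5) < 4 ∧ (4:Fin 5) < 0) by decide),
    if_neg (show ¬((2:Fin 5) < 4 ∧ (4:Fin 5) < 1) by decide),
    if_neg (show ¬((2:Fin 5) < 4 ∧ (4:Fin 5) < 2) by decide),
    if_neg (show ¬((2:Fin 5) < 4 ∧ (4:Fin 5) < 3) by decide),
    if_neg (show ¬((2:Fin 5) < 4 ∧ (4:Fin 5) < 4) by decide),
    if_neg (show ¬((3:Fin 5) < 0 ∧ (0:Fin 5) < 0) by decide),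
    if_neg (show ¬((3:Fin 5) < 0 ∧ (0:Fin 5) < 1) by decide),
    if_neg (show ¬((3:Fin 5) < 0 ∧ (0:Fin 5) < 2) by decide),
    if_neg (show ¬((3:Fin 5) < 0 ∧ (0:Fin 5) < 3) by decide),
    if_neg (show ¬((3:Fin 5) < 0 ∧ (0:Fin 5) < 4) by decide),
    if_neg (show ¬((3:Fin 5) < 1 ∧ (1:Fin 5) < 0) by decide),
    if_neg (show ¬((3:Fin 5) < 1 ∧ (1:Fin 5) < 1) by decide),
    if_neg (show ¬((3:Fin 5) < 1 ∧ (1:Fin 5) < 2) by decide),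
    if_neg (show ¬((3:Fin 5) < 1 ∧ (1:Fin 5) < 3) by decide),
    if_neg (show ¬((3:Fin 5) < 1 ∧ (1:Fin 5) < 4) by decide),
    if_neg (show ¬((3:Fin 5) < 2 ∧ (2:Fin 5) < 0) by decide),
    if_neg (show ¬((3:Fin 5) < 2 ∧ (2:Fin 5) < 1) by decide),
    if_neg (show ¬((3:Fin 5) < 2 ∧ (2:Fin 5) < 2) by decide),
    if_neg (show ¬((3:Fin 5) < 2 ∧ (2:Fin 5) < 3) by decide),
    if_neg (show ¬((3:Fin 5) < 2 ∧ (2:Fin 5) < 4) by decide),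
    if_neg (show ¬((3:Fin 5) < 3 ∧ (3:Fin 5) < 0) by decide),
    if_neg (show ¬((3:Fin 5) < 3 ∧ (3:Fin 5) < 1) by decide),
    if_neg (show ¬((3:Fin 5) < 3 ∧ (3:Fin 5) < 2) by decide),
    if_neg (show ¬((3:Fin 5) < 3 ∧ (3:Fin 5) < 3) by decide),
    if_neg (show ¬((3:Fin 5) < 3 ∧ (3:Fin 5) < 4) by decide),
    if_neg (show ¬((3:Fin 5) < 4 ∧ (4:Fin 5) < 0) by decide),
    if_neg (show ¬((3:Fin 5) < 4 ∧ (4:Fin 5) < 1) by decide),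
    if_neg (show ¬((3:Fin 5) < 4 ∧ (4:Fin 5) < 2) by decide),
    if_neg (show ¬((3:Fin 5) < 4 ∧ (4:Fin 5) < 3) by decide),
    if_neg (show ¬((3:Fin 5) < 4 ∧ (4:Fin 5) < 4) by decide),
    if_neg (show ¬((4:Fin 5) < 0 ∧ (0:Fin 5) < 0) by decide),
    if_neg (show ¬((4:Fin 5) < 0 ∧ (0:Fin 5) < 1) by decide),
    if_neg (show ¬((4:Fin 5) < 0 ∧ (0:Fin 5) < 2) by decide),
    if_neg (show ¬((4:Fin 5) < 0 ∧ (0:Fin 5) < 3) by decide),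
    if_neg (show ¬((4:Fin 5) < 0 ∧ (0:Fin 5) < 4) by decide),
    if_neg (show ¬((4:Fin 5) < 1 ∧ (1:Fin 5) < 0) by decide),
    if_neg (show ¬((4:Fin 5) < 1 ∧ (1:Fin 5) < 1) by decide),
    if_neg (show ¬((4:Fin 5) < 1 ∧ (1:Fin 5) < 2) by decide),
    if_neg (show ¬((4:Fin 5) < 1 ∧ (1:Fin 5) < 3) by decide),
    if_neg (show ¬((4:Fin 5) < 1 ∧ (1:Fin 5) < 4) by decide),
    if_neg (show ¬((4:Fin 5) < 2 ∧ (2:Fin 5) < 0) by decide),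
    if_neg (show ¬((4:Fin 5) < 2 ∧ (2:Fin 5) < 1) by decide),
    if_neg (show ¬((4:Fin 5) < 2 ∧ (2:Fin 5) < 2) by decide),
    if_neg (show ¬((4:Fin 5) < 2 ∧ (2:Fin 5) < 3) by decide),
    if_neg (show ¬((4:Fin 5) < 2 ∧ (2:Fin 5) < 4) by decide),
    if_neg (show ¬((4:Fin 5) < 3 ∧ (3:Fin 5) < 0) by decide),
    if_neg (show ¬((4:Fin 5) < 3 ∧ (3:Fin 5) < 1) by decide),
    if_neg (show ¬((4:Fin 5) < 3 ∧ (3:Fin 5) < 2) by decide),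
    if_neg (show ¬((4:Fin 5) < 3 ∧ (3:Fin 5) < 3) by decide),
    if_neg (show ¬((4:Fin 5) < 3 ∧ (3:Fin 5) < 4) by decide),
    if_neg (show ¬((4:Fin 5) < 4 ∧ (4:Fin 5) < 0) by decide),
    if_neg (show ¬((4:Fin 5) < 4 ∧ (4:Fin 5) < 1) by decide),
    if_neg (show ¬((4:Fin 5) < 4 ∧ (4:Fin 5) < 2) by decide),
    if_neg (show ¬((4:Fin 5) < 4 ∧ (4:Fin 5) < 3) by decide),
    if_neg (show ¬((4:Fin 5) < 4 ∧ (4:Fin 5) < 4) by decide)]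
  ring

def det3' (a b c : Fin 3 → ℝ) : ℝ :=
  a 0 * b 1 * c 2 - a 0 * b 2 * c 1 - a 1 * b 0 * c 2
    + a 1 * b 2 * c 0 + a 2 * b 0 * c 1 - a 2 * b 1 * c 0

set_option maxHeartbeats 2000000 in
lemma cauchy_binet (v : Fin 5 → Fin 3 → ℝ) :
    (Matrix.of fun k l : Fin 3 => ∑ i : Fin 5, v i k * v i l).det
      = ∑ i : Fin 5, ∑ j : Fin 5, ∑ k : Fin 5, if i < j ∧ j < k then
          det3' (v i) (v j) (v k) ^ 2 else 0 := by
  rw [sum_triples (fun i j k => det3' (v i) (v j) (v k) ^ 2)]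
  simp only [Matrix.det_fin_three, Matrix.of_apply, det3', Fin.sum_univ_five]
  ring

end Stmt13Aux

/-- For any five unit vectors `v 0, …, v 4` in `ℝ³`,
`∑_{i<j<k} vol_3(conv {0, v i, v j, v k})² ≤ (1/(3!)²) (5/3)³ = 125/972`. -/
theorem stmt_13 (v : Fin 5 → EuclideanSpace ℝ (Fin 3)) (hv : ∀ j, ‖v j‖ = 1) :
    (∑ i : Fin 5, ∑ j : Fin 5, ∑ k : Fin 5, if i < j ∧ j < k then
        (volume (convexHull ℝ
          {(0 : EuclideanSpace ℝ (Fin 3)), v i, v j, v k})).toReal ^ 2 else 0) ≤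
      125 / 972 := by
  classical
  set w : Fin 5 → Fin 3 → ℝ := fun i k => v i k with hw
  set A : Matrix (Fin 5) (Fin 3) ℝ := Matrix.of fun i k => w i k with hA
  set G : Matrix (Fin 3) (Fin 3) ℝ := Matrix.of fun k l => ∑ i, w i k * w i l with hG
  have hGA : G = A.conjTranspose * A := by
    ext k l
    simp [hG, hA, Matrix.mul_apply, Matrix.conjTranspose_apply, mul_comm]
  have hpsd : G.PosSemidef := hGA ▸ Matrix.posSemidef_conjTranspose_mul_self A
  have hherm : G.IsHermitian := hpsd.1
  set μ : Fin 3 → ℝ := hherm.eigenvalues with hμ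
  have hnn : ∀ i, 0 ≤ μ i := fun i => hpsd.eigenvalues_nonneg i
  have hdet : G.det = μ 0 * μ 1 * μ 2 := by
    rw [hherm.det_eq_prod_eigenvalues, Fin.prod_univ_three]
    simp [hμ]
  have hnormsq : ∀ i : Fin 5, w i 0 ^ 2 + w i 1 ^ 2 + w i 2 ^ 2 = 1 := by
    intro i
    have h := hv i
    rw [EuclideanSpace.norm_eq] at h
    rw [Real.sqrt_eq_one] at h
    rw [Fin.sum_univ_three] at h
    simpa [Real.norm_eq_abs, sq_abs] using h
  have htr5 : G.trace = 5 := by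
    rw [Matrix.trace]
    rw [Fin.sum_univ_three]
    simp only [Matrix.diag_apply, hG, Matrix.of_apply]
    rw [← Finset.sum_add_distrib, ← Finset.sum_add_distrib]
    have : ∀ i : Fin 5, w i 0 * w i 0 + w i 1 * w i 1 + w i 2 * w i 2 = 1 := by
      intro i; have := hnormsq i; nlinarith [hnormsq i]
    rw [Finset.sum_congr rfl fun i _ => this i]
    simp
  have htrace : G.trace = μ 0 + μ 1 + μ 2 := by
    set U : Matrix (Fin 3) (Fin 3) ℝ := (hherm.eigenvectorUnitary : Matrix (Fin 3) (Fin 3) ℝ)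
      with hU
    have hsp := hherm.spectral_theorem
    have h1 : star U * U = 1 := hherm.eigenvectorUnitary.prop.1
    calc G.trace = (U * Matrix.diagonal (RCLike.ofReal ∘ μ) * star U).trace := by
          rw [hsp]; rfl
      _ = (star U * (U * Matrix.diagonal (RCLike.ofReal ∘ μ))).trace := by
          rw [Matrix.trace_mul_comm]
      _ = (Matrix.diagonal (RCLike.ofReal ∘ μ)).trace := by
          rw [← mul_assoc, h1, one_mul]
      _ = μ 0 + μ 1 + μ 2 := by
          rw [Matrix.trace_diagonal, Fin.sum_univ_three]
          simp
  have hsum5 : μ 0 + μ 1 + μ 2 = 5 := by rw [← htrace, htr5]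
  have hdetle : G.det ≤ 125 / 27 := by
    rw [hdet]
    nlinarith [hnn 0, hnn 1, hnn 2, sq_nonneg (μ 0 - μ 1), sq_nonneg (μ 1 - μ 2),
      sq_nonneg (μ 0 - μ 2), mul_nonneg (hnn 0) (hnn 1), mul_nonneg (hnn 1) (hnn 2),
      mul_nonneg (hnn 0) (hnn 2),
      mul_nonneg (mul_nonneg (hnn 0) (hnn 1)) (hnn 2)]
  have step1 : (∑ i : Fin 5, ∑ j : Fin 5, ∑ k : Fin 5, if i < j ∧ j < k then
        (volume (convexHull ℝ
          {(0 : EuclideanSpace ℝ (Fin 3)), v i, v j, v k})).toReal ^ 2 else 0)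
      ≤ ∑ i : Fin 5, ∑ j : Fin 5, ∑ k : Fin 5, if i < j ∧ j < k then
          det3' (w i) (w j) (w k) ^ 2 / 36 else 0 := by
    refine Finset.sum_le_sum fun i _ => Finset.sum_le_sum fun j _ =>
      Finset.sum_le_sum fun k _ => ?_
    split
    · have h := tetra_vol (v i) (v j) (v k)
      have h2 : (volume (convexHull ℝ
          {(0 : EuclideanSpace ℝ (Fin 3)), v i, v j, v k})).toReal ^ 2
          ≤ (|det3 (v i) (v j) (v k)| / 6) ^ 2 :=
        pow_le_pow_left₀ ENNReal.toReal_nonneg h 2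
      refine le_trans h2 (le_of_eq ?_)
      have : det3 (v i) (v j) (v k) = det3' (w i) (w j) (w k) := rfl
      rw [div_pow, sq_abs, this]
      norm_num
    · exact le_refl 0
  have step2 : (∑ i : Fin 5, ∑ j : Fin 5, ∑ k : Fin 5, if i < j ∧ j < k then
          det3' (w i) (w j) (w k) ^ 2 / 36 else 0)
      = (∑ i : Fin 5, ∑ j : Fin 5, ∑ k : Fin 5, if i < j ∧ j < k then
          det3' (w i) (w j) (w k) ^ 2 else 0) / 36 := by
    simp only [Finset.sum_div]
    refine Finset.sum_congr rfl fun i _ => Finset.sum_congr rfl fun j _ =>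
      Finset.sum_congr rfl fun k _ => ?_
    split <;> norm_num
  refine le_trans step1 ?_
  rw [step2, ← cauchy_binet w]
  have : (Matrix.of fun k l : Fin 3 => ∑ i : Fin 5, w i k * w i l).det = G.det := rfl
  rw [this]
  linarith
end

section
/- Let d ≥ 1 and let v_1, …, v_{d+1} ∈ ℝ^d be affinely independent, with T = conv{v_1, …, v_{d+1}}. Then the edge frame operator satisfies det(Σ_{1≤i<j≤d+1} (v_j − v_i)(v_j − v_i)ᵀ) = (d+1)^{d−1} · (d! · vol_d(T))², where (d+1)^{d−1} is the number of d-element subsets of the edge vectors of T that span ℝ^d (equivalently, by Cayley's formula, the number of spanning trees of the complete graph on d+1 vertices). -/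
open MeasureTheory
open Pointwise Finset

lemma vol_corner (n : ℕ) (s : ℝ) :
    volume {x : Fin n → ℝ | (∀ i, 0 ≤ x i) ∧ ∑ i, x i ≤ s} =
      if 0 ≤ s then ENNReal.ofReal (s ^ n / n.factorial) else 0 := by
  induction n generalizing s with
  | zero =>
      by_cases hs : 0 ≤ s
      · have : {x : Fin 0 → ℝ | (∀ i, 0 ≤ x i) ∧ ∑ i, x i ≤ s} = Set.univ := by
          ext x; simp [hs]
        rw [this, if_pos hs]
        rw [MeasureTheory.volume_pi, Measure.pi_univ]
        simp
      · have : {x : Fin 0 → ℝ | (∀ i, 0 ≤ x i) ∧ ∑ i, x i ≤ s} = ∅ := by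
          ext x; simp [hs]
        simp [this, hs]
  | succ n ih =>
      set A : Set (ℝ × (Fin n → ℝ)) :=
        {p | 0 ≤ p.1 ∧ (∀ i, 0 ≤ p.2 i) ∧ p.1 + ∑ i, p.2 i ≤ s} with hA_def
      have hA : MeasurableSet A := by
        have h1 : Measurable fun p : ℝ × (Fin n → ℝ) => p.1 + ∑ i, p.2 i :=
          measurable_fst.add (Finset.measurable_sum Finset.univ
            (fun i _ => measurable_snd.eval))
        have : A = {p : ℝ × (Fin n → ℝ) | 0 ≤ p.1} ∩
            ((⋂ i, {p : ℝ × (Fin n → ℝ) | 0 ≤ p.2 i}) ∩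
              {p : ℝ × (Fin n → ℝ) | p.1 + ∑ i, p.2 i ≤ s}) := by
          ext p; simp [hA_def, Set.mem_iInter, and_assoc]
        rw [this]
        exact (measurableSet_le measurable_const measurable_fst).inter
          ((MeasurableSet.iInter fun i =>
            measurableSet_le measurable_const measurable_snd.eval).inter
           (measurableSet_le h1 measurable_const))
      have hpre : {x : Fin (n+1) → ℝ | (∀ i, 0 ≤ x i) ∧ ∑ i, x i ≤ s} =
          (MeasurableEquiv.piFinSuccAbove (fun _ : Fin (n+1) => ℝ) 0) ⁻¹' A := by
        ext x
        simp only [Set.mem_setOf_eq, Set.mem_preimage, MeasurableEquiv.piFinSuccAbove,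
          MeasurableEquiv.coe_mk, hA_def]
        constructor
        · rintro ⟨h0, hsum⟩
          refine ⟨h0 0, fun i => h0 _, ?_⟩
          rw [Fin.sum_univ_succ] at hsum
          convert hsum using 2 <;> simp [Fin.succAbove, Fin.tail]
        · rintro ⟨h0, hi, hsum⟩
          refine ⟨fun i => ?_, ?_⟩
          · rcases Fin.eq_zero_or_eq_succ i with rfl | ⟨j, rfl⟩
            · exact h0
            · simpa [Fin.succAbove, Fin.tail] using hi j
          · rw [Fin.sum_univ_succ]
            convert hsum using 2 <;> simp [Fin.succAbove, Fin.tail]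
      rw [hpre, (volume_preserving_piFinSuccAbove (fun _ : Fin (n+1) => ℝ) 0).measure_preimage
        hA.nullMeasurableSet]
      have hvol : (volume : Measure (ℝ × (Fin n → ℝ))) = (volume : Measure ℝ).prod volume := rfl
      rw [hvol, Measure.prod_apply hA]
      have hslice : ∀ t : ℝ, volume (Prod.mk t ⁻¹' A) =
          if 0 ≤ t ∧ 0 ≤ s - t then ENNReal.ofReal ((s - t) ^ n / n.factorial) else 0 := by
        intro t
        by_cases ht : 0 ≤ t
        · have : Prod.mk t ⁻¹' A = {x : Fin n → ℝ | (∀ i, 0 ≤ x i) ∧ ∑ i, x i ≤ s - t} := by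
            ext x
            simp only [Set.mem_preimage, hA_def, Set.mem_setOf_eq, ht, true_and]
            constructor
            · rintro ⟨h1, h2⟩; exact ⟨h1, by linarith⟩
            · rintro ⟨h1, h2⟩; exact ⟨h1, by linarith⟩
          rw [this, ih]
          by_cases hst : 0 ≤ s - t <;> simp [ht, hst]
        · have : Prod.mk t ⁻¹' A = ∅ := by
            ext x; simp only [Set.mem_preimage, hA_def, Set.mem_setOf_eq]
            tauto
          simp [this, ht]
      simp only [hslice]
      by_cases hs : 0 ≤ s
      · have heq : (fun t : ℝ => if 0 ≤ t ∧ 0 ≤ s - t then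
            ENNReal.ofReal ((s - t) ^ n / n.factorial) else 0) =
            Set.indicator (Set.Icc 0 s) (fun t => ENNReal.ofReal ((s - t) ^ n / n.factorial)) := by
          funext t
          by_cases h : 0 ≤ t ∧ 0 ≤ s - t
          · rw [if_pos h, Set.indicator_of_mem (by constructor <;> [exact h.1; linarith [h.2]])]
          · rw [if_neg h, Set.indicator_of_notMem (by
              rintro ⟨h1, h2⟩; exact h ⟨h1, by linarith⟩)]
        rw [heq, lintegral_indicator measurableSet_Icc]
        have hint : IntegrableOn (fun t : ℝ => (s - t) ^ n / n.factorial) (Set.Icc 0 s) := by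
          apply Continuous.integrableOn_Icc
          continuity
        rw [← ofReal_integral_eq_lintegral_ofReal hint ((ae_restrict_iff' measurableSet_Icc).2
          (ae_of_all _ (fun t ht => by
            have : (0:ℝ) ≤ (s - t) ^ n := pow_nonneg (by linarith [ht.2]) n
            positivity)))]
        rw [if_pos hs]
        congr 1
        rw [MeasureTheory.integral_Icc_eq_integral_Ioc,
          ← intervalIntegral.integral_of_le hs]
        have : ∫ t in (0:ℝ)..s, (s - t) ^ n / n.factorial =
            (∫ t in (0:ℝ)..s, (s - t) ^ n) / n.factorial := by
          rw [intervalIntegral.integral_div]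
        rw [this, intervalIntegral.integral_comp_sub_left (fun u => u ^ n) s]
        simp only [sub_self, sub_zero, integral_pow, zero_pow (Nat.succ_ne_zero n)]
        rw [Nat.factorial_succ]
        push_cast
        field_simp
      · rw [if_neg hs]
        have : ∀ t : ℝ, (if 0 ≤ t ∧ 0 ≤ s - t then
            ENNReal.ofReal ((s - t) ^ n / n.factorial) else 0) = 0 := by
          intro t
          rw [if_neg]; rintro ⟨h1, h2⟩; exact hs (by linarith)
        simp only [this, lintegral_zero]

lemma entry_lhs (d : ℕ) (a b : Fin (d + 1) → ℝ) :
    ∑ i : Fin (d + 1), ∑ j : Fin (d + 1),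
        (if i < j then (a j - a i) * (b j - b i) else 0) =
      ((d : ℝ) + 1) * (∑ i, a i * b i) - (∑ i, a i) * (∑ i, b i) := by
  have key : (2 : ℝ) * (∑ i : Fin (d + 1), ∑ j : Fin (d + 1),
      (if i < j then (a j - a i) * (b j - b i) else 0)) =
      ∑ i : Fin (d + 1), ∑ j : Fin (d + 1), (a j - a i) * (b j - b i) := by
    have h1 : ∀ i j : Fin (d + 1), (a j - a i) * (b j - b i) =
        (if i < j then (a j - a i) * (b j - b i) else 0) +
        (if j < i then (a j - a i) * (b j - b i) else 0) := by
      intro i j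
      rcases lt_trichotomy i j with h | h | h
      · simp [h, not_lt_of_gt h]
      · subst h; simp
      · simp [h, not_lt_of_gt h]
    calc (2 : ℝ) * (∑ i : Fin (d + 1), ∑ j : Fin (d + 1),
          (if i < j then (a j - a i) * (b j - b i) else 0))
        = (∑ i : Fin (d + 1), ∑ j : Fin (d + 1),
            (if i < j then (a j - a i) * (b j - b i) else 0)) +
          (∑ i : Fin (d + 1), ∑ j : Fin (d + 1),
            (if j < i then (a j - a i) * (b j - b i) else 0)) := by
          rw [two_mul]
          congr 1
          rw [Finset.sum_comm]
          refine Finset.sum_congr rfl fun i _ => Finset.sum_congr rfl fun j _ => ?_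
          congr 1
          ring
      _ = ∑ i : Fin (d + 1), ∑ j : Fin (d + 1), (a j - a i) * (b j - b i) := by
          rw [← Finset.sum_add_distrib]
          refine Finset.sum_congr rfl fun i _ => ?_
          rw [← Finset.sum_add_distrib]
          exact Finset.sum_congr rfl fun j _ => (h1 i j).symm
  have expand : ∑ i : Fin (d + 1), ∑ j : Fin (d + 1), (a j - a i) * (b j - b i) =
      2 * (((d : ℝ) + 1) * (∑ i, a i * b i) - (∑ i, a i) * (∑ i, b i)) := by
    have h2 : ∀ i : Fin (d + 1), ∑ j : Fin (d + 1), (a j - a i) * (b j - b i) =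
        (∑ j, a j * b j) - (∑ j, a j) * b i - a i * (∑ j, b j)
          + ((d : ℝ) + 1) * (a i * b i) := by
      intro i
      have : ∀ j : Fin (d+1), (a j - a i) * (b j - b i) =
          a j * b j - a j * b i - a i * b j + a i * b i := fun j => by ring
      simp only [this, Finset.sum_add_distrib, Finset.sum_sub_distrib, ← Finset.sum_mul,
        ← Finset.mul_sum, Finset.sum_const, Finset.card_univ, Fintype.card_fin, nsmul_eq_mul]
      push_cast
      ring
    simp only [h2, Finset.sum_add_distrib, Finset.sum_sub_distrib, ← Finset.sum_mul,
      ← Finset.mul_sum, Finset.sum_const, Finset.card_univ, Fintype.card_fin, nsmul_eq_mul]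
    push_cast
    ring
  linarith

lemma entry_rhs (d : ℕ) (a b : Fin (d + 1) → ℝ) :
    ((d : ℝ) + 1) * (∑ k : Fin d, (a k.succ - a 0) * (b k.succ - b 0)) -
        (∑ k : Fin d, (a k.succ - a 0)) * (∑ k : Fin d, (b k.succ - b 0)) =
      ((d : ℝ) + 1) * (∑ i, a i * b i) - (∑ i, a i) * (∑ i, b i) := by
  have e1 : ∑ i : Fin (d+1), a i * b i = a 0 * b 0 + ∑ k : Fin d, a k.succ * b k.succ :=
    Fin.sum_univ_succ _
  have e2 : ∑ i : Fin (d+1), a i = a 0 + ∑ k : Fin d, a k.succ := Fin.sum_univ_succ _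
  have e3 : ∑ i : Fin (d+1), b i = b 0 + ∑ k : Fin d, b k.succ := Fin.sum_univ_succ _
  have e4 : ∑ k : Fin d, (a k.succ - a 0) * (b k.succ - b 0) =
      (∑ k : Fin d, a k.succ * b k.succ) - (∑ k : Fin d, a k.succ) * b 0
        - a 0 * (∑ k : Fin d, b k.succ) + (d : ℝ) * (a 0 * b 0) := by
    have : ∀ k : Fin d, (a k.succ - a 0) * (b k.succ - b 0) =
        a k.succ * b k.succ - a k.succ * b 0 - a 0 * b k.succ + a 0 * b 0 := fun k => by ring
    simp only [this, Finset.sum_add_distrib, Finset.sum_sub_distrib, ← Finset.sum_mul,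
      ← Finset.mul_sum, Finset.sum_const, Finset.card_univ, Fintype.card_fin, nsmul_eq_mul]
    ring
  have e5 : ∑ k : Fin d, (a k.succ - a 0) = (∑ k : Fin d, a k.succ) - (d : ℝ) * a 0 := by
    rw [Finset.sum_sub_distrib]
    simp [Finset.sum_const]
  have e6 : ∑ k : Fin d, (b k.succ - b 0) = (∑ k : Fin d, b k.succ) - (d : ℝ) * b 0 := by
    rw [Finset.sum_sub_distrib]
    simp [Finset.sum_const]
  rw [e1, e2, e3, e4, e5, e6]
  ring

lemma detN (d : ℕ) (hd : 1 ≤ d) :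
    (((d : ℝ) + 1) • (1 : Matrix (Fin d) (Fin d) ℝ) - Matrix.of fun _ _ => (1 : ℝ)).det =
      ((d : ℝ) + 1) ^ (d - 1) := by
  have hpos : (0 : ℝ) < (d : ℝ) + 1 := by positivity
  have hrw : ((d : ℝ) + 1) • (1 : Matrix (Fin d) (Fin d) ℝ) - Matrix.of (fun _ _ => (1 : ℝ)) =
      ((d : ℝ) + 1) • (1 + Matrix.replicateCol Unit (fun _ => -(1 / ((d : ℝ) + 1))) *
        Matrix.replicateRow Unit (fun _ => (1 : ℝ))) := by
    ext r c
    simp only [Matrix.sub_apply, Matrix.smul_apply, Matrix.add_apply, Matrix.mul_apply,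
      Matrix.replicateCol_apply, Matrix.replicateRow_apply, Matrix.of_apply, Finset.univ_unique,
      Finset.sum_singleton, smul_eq_mul, Matrix.one_apply]
    by_cases h : r = c <;> · field_simp; try ring
  rw [hrw, Matrix.det_smul, Matrix.det_one_add_replicateCol_mul_replicateRow]
  simp only [dotProduct, Finset.sum_const, Finset.card_univ, Fintype.card_fin,
    nsmul_eq_mul, smul_eq_mul, mul_neg, mul_one, one_mul]
  have h1 : (1 : ℝ) + -((d : ℝ) * (1 / ((d : ℝ) + 1))) = 1 / ((d : ℝ) + 1) := by field_simp; ring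
  rw [h1]
  obtain ⟨m, rfl⟩ : ∃ m, d = m + 1 := ⟨d - 1, (Nat.succ_pred_eq_of_pos hd).symm⟩
  simp only [Nat.add_sub_cancel, pow_succ]
  have : ((m : ℝ) + 1 + 1) ≠ 0 := by positivity
  field_simp

lemma vol_simplex (d : ℕ) (w : Fin (d + 1) → (Fin d → ℝ)) :
    volume (convexHull ℝ (Set.range w)) =
      ENNReal.ofReal (|(Matrix.of fun r k : Fin d => w k.succ r - w 0 r).det| / d.factorial) := by
  classical
  set M : Matrix (Fin d) (Fin d) ℝ := Matrix.of fun r k : Fin d => w k.succ r - w 0 r with hM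
  set S : Set (Fin d → ℝ) := {x | (∀ i, 0 ≤ x i) ∧ ∑ i, x i ≤ 1} with hS
  have hL : ∀ x : Fin d → ℝ, Matrix.toLin' M x = ∑ k : Fin d, x k • (w k.succ - w 0) := by
    intro x
    funext r
    simp only [Matrix.toLin'_apply, Matrix.mulVec, dotProduct, hM, Matrix.of_apply,
      Finset.sum_apply, Pi.smul_apply, Pi.sub_apply, smul_eq_mul]
    exact Finset.sum_congr rfl fun k _ => by ring
  have hSconv : Convex ℝ S := by
    have h1 : Convex ℝ {x : Fin d → ℝ | ∀ i, 0 ≤ x i} := by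
      have : {x : Fin d → ℝ | ∀ i, 0 ≤ x i} = Set.univ.pi (fun _ => Set.Ici 0) := by
        ext x; simp only [Set.mem_univ_pi, Set.mem_Ici, Set.mem_setOf_eq]
      rw [this]
      exact convex_pi fun i _ => convex_Ici 0
    have h2 : Convex ℝ {x : Fin d → ℝ | ∑ i, x i ≤ 1} :=
      convex_halfSpace_le ⟨fun x y => by simp [Finset.sum_add_distrib],
        fun c x => by simp [Finset.mul_sum]⟩ 1
    exact h1.inter h2
  have hset : convexHull ℝ (Set.range w) = w 0 +ᵥ (Matrix.toLin' M '' S) := by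
    apply Set.Subset.antisymm
    · apply convexHull_min
      · rintro _ ⟨i, rfl⟩
        rcases Fin.eq_zero_or_eq_succ i with rfl | ⟨k, rfl⟩
        · refine ⟨0, ⟨0, ⟨fun i => le_refl 0, by simp⟩, map_zero _⟩, by simp⟩
        · refine ⟨Matrix.toLin' M (Pi.single k 1), ⟨Pi.single k 1, ⟨fun i => ?_, ?_⟩, rfl⟩, ?_⟩
          · by_cases h : i = k <;> simp [h, Pi.single_apply]
          · simp [Finset.sum_pi_single']
          · rw [hL]
            rw [Finset.sum_eq_single k (fun l _ hl => by simp [Pi.single_apply, hl])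
              (by simp), Pi.single_eq_same, one_smul]
            simp only [vadd_eq_add]
            abel
      · exact ((hSconv.linear_image (Matrix.toLin' M)).vadd _)
    · rintro _ ⟨y, ⟨x, hx, rfl⟩, rfl⟩
      set t : Fin (d + 1) → ℝ := Fin.cases (1 - ∑ k, x k) (fun k => x k) with ht
      have ht0 : ∀ i, 0 ≤ t i := by
        intro i
        rcases Fin.eq_zero_or_eq_succ i with rfl | ⟨k, rfl⟩
        · simp only [ht, Fin.cases_zero]; linarith [hx.2]
        · simpa [ht] using hx.1 k
      have hts : ∑ i, t i = 1 := by
        rw [Fin.sum_univ_succ]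
        simp [ht]
      have hcomb := affineCombination_mem_convexHull (v := w)
        (w := t) (s := Finset.univ) (fun i _ => ht0 i) hts
      rw [Finset.affineCombination_eq_linear_combination _ _ _ hts] at hcomb
      convert hcomb using 1
      simp only [vadd_eq_add]
      rw [hL, Fin.sum_univ_succ]
      simp only [ht, Fin.cases_zero, Fin.cases_succ]
      rw [sub_smul, one_smul, Finset.sum_smul]
      simp only [smul_sub]
      rw [Finset.sum_sub_distrib]
      abel
  have hSvol : volume S = ENNReal.ofReal (1 / d.factorial) := by
    have h := vol_corner d 1
    rw [if_pos zero_le_one, one_pow] at h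
    exact h
  rw [hset, measure_vadd, Measure.addHaar_image_linearMap, LinearMap.det_toLin', hSvol,
    ← ENNReal.ofReal_mul (abs_nonneg _)]
  rw [mul_one_div]

lemma pi_key (d : ℕ) (hd : 1 ≤ d) (w : Fin (d + 1) → (Fin d → ℝ)) :
    (Matrix.of fun r c : Fin d => ∑ i : Fin (d + 1), ∑ j : Fin (d + 1),
        if i < j then (w j - w i) r * (w j - w i) c else 0).det =
      ((d : ℝ) + 1) ^ (d - 1) *
        ((Nat.factorial d : ℝ) * (volume (convexHull ℝ (Set.range w))).toReal) ^ 2 := by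
  classical
  set M : Matrix (Fin d) (Fin d) ℝ := Matrix.of fun r k : Fin d => w k.succ r - w 0 r with hM
  set N : Matrix (Fin d) (Fin d) ℝ :=
    ((d : ℝ) + 1) • 1 - Matrix.of fun _ _ => (1 : ℝ) with hN
  have hA : (Matrix.of fun r c : Fin d => ∑ i : Fin (d + 1), ∑ j : Fin (d + 1),
      if i < j then (w j - w i) r * (w j - w i) c else 0) = M * N * M.transpose := by
    ext r c
    have h1 : ∀ l, (M * N) r l = ((d : ℝ) + 1) * M r l - ∑ k, M r k := by
      intro l
      rw [Matrix.mul_apply]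
      have : ∀ k, M r k * N k l =
          (if k = l then ((d : ℝ) + 1) * M r k else 0) - M r k := by
        intro k
        simp only [hN, Matrix.sub_apply, Matrix.smul_apply, Matrix.one_apply, Matrix.of_apply,
          smul_eq_mul]
        by_cases h : k = l <;> simp [h] <;> try ring
      simp only [this, Finset.sum_sub_distrib, Finset.sum_ite_eq' Finset.univ,
        Finset.mem_univ, if_true]
      try ring
    have h2 : (M * N * M.transpose) r c =
        ((d : ℝ) + 1) * (∑ l, M r l * M c l) - (∑ k, M r k) * (∑ l, M c l) := by
      rw [Matrix.mul_apply]
      simp only [Matrix.transpose_apply, h1, sub_mul, Finset.sum_sub_distrib, Finset.mul_sum,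
        Finset.sum_mul, mul_assoc]
    rw [Matrix.of_apply, h2]
    have hLHS := entry_lhs d (fun i => w i r) (fun i => w i c)
    have hRHS := entry_rhs d (fun i => w i r) (fun i => w i c)
    simp only [hM, Matrix.of_apply, Pi.sub_apply]
    rw [hLHS, ← hRHS]
  rw [hA, Matrix.det_mul, Matrix.det_mul, Matrix.det_transpose, detN d hd,
    vol_simplex d w]
  rw [ENNReal.toReal_ofReal (by positivity)]
  have hfac : (0 : ℝ) < d.factorial := by positivity
  have : (d.factorial : ℝ) * (|M.det| / d.factorial) = |M.det| := by field_simp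
  rw [this]
  rw [sq_abs]
  ring


/-- For affinely independent `v 1, …, v (d+1) ∈ ℝ^d` with simplex
`T = conv {v j}`, the edge frame operator satisfies
`det (∑_{i<j} (v j - v i)(v j - v i)ᵀ) = (d+1)^{d-1} (d! vol_d(T))²`,
where `(d+1)^{d-1}` is Cayley's count of spanning trees of the complete graph on `d+1`
vertices. -/
theorem stmt_19 (d : ℕ) (hd : 1 ≤ d) (v : Fin (d + 1) → EuclideanSpace ℝ (Fin d))
    (h_ind : AffineIndependent ℝ v) :
    (Matrix.of fun r c : Fin d => ∑ i : Fin (d + 1), ∑ j : Fin (d + 1),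
        if i < j then (v j - v i) r * (v j - v i) c else 0).det =
      ((d : ℝ) + 1) ^ (d - 1) *
        ((Nat.factorial d : ℝ) * (volume (convexHull ℝ (Set.range v))).toReal) ^ 2 := by
  classical
  set e := (MeasurableEquiv.toLp 2 (Fin d → ℝ)).symm with he
  set L := WithLp.linearEquiv 2 ℝ (Fin d → ℝ) with hL
  set w : Fin (d + 1) → (Fin d → ℝ) := fun i => L (v i) with hw
  have hmat : (Matrix.of fun r c : Fin d => ∑ i : Fin (d + 1), ∑ j : Fin (d + 1),
      if i < j then (v j - v i) r * (v j - v i) c else 0) =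
      (Matrix.of fun r c : Fin d => ∑ i : Fin (d + 1), ∑ j : Fin (d + 1),
      if i < j then (w j - w i) r * (w j - w i) c else 0) := rfl
  have hvol : volume (convexHull ℝ (Set.range v)) = volume (convexHull ℝ (Set.range w)) := by
    have himg : (⇑e) ⁻¹' (convexHull ℝ (Set.range w)) = convexHull ℝ (Set.range v) := by
      have hel : (⇑e) = ⇑L := rfl
      have hrw : Set.range w = L '' Set.range v := by rw [← Set.range_comp]; rfl
      have hh := LinearMap.image_convexHull (𝕜 := ℝ) L.toLinearMap (Set.range v)
      simp only [LinearEquiv.coe_coe] at hh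
      rw [hel, hrw, ← hh]
      exact Set.preimage_image_eq _ L.injective
    rw [← himg, (EuclideanSpace.volume_preserving_symm_measurableEquiv_toLp (Fin d)).measure_preimage_emb
      (MeasurableEquiv.measurableEmbedding e)]
  rw [hmat, hvol]
  exact pi_key d hd w
end
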